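/- arXiv:2007.06893 — 7 statements merged into one kernel-verified Lean document; each statement's English description precedes it below -/
import Mathlib

section
/- Let Γ ⊆ Pⁿ be a finite set of d points in linearly general position and let m ≥ 2 be an integer with d ≤ mn. Then the homogeneous ideal I(Γ) is generated by its homogeneous elements of degree at most m. -/
open MvPolynomial

noncomputable section

/-- A set `Γ` in projective `n`-space over `k` is in linearly general position if any
`n+1` or fewer of its points have linearly independent representative vectors. -/
def LinGenPos (k : Type*) [Field k] (n : ℕ)
    (Γ : Set (Projectivization k (Fin (n + 1) → k))) : Prop :=
  ∀ s : Finset (Projectivization k (Fin (n + 1) → k)), ↑s ⊆ Γ → s.card ≤ n + 1 →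
    LinearIndependent k
      (fun p : s => Projectivization.rep (p : Projectivization k (Fin (n + 1) → k)))

/-- The subspace of polynomials vanishing at (fixed representatives of) all points of `Γ`. -/
def evalVanishing (k : Type*) [Field k] (n : ℕ)
    (Γ : Set (Projectivization k (Fin (n + 1) → k))) :
    Submodule k (MvPolynomial (Fin (n + 1)) k) where
  carrier := {F | ∀ P ∈ Γ, eval (Projectivization.rep P) F = 0}
  add_mem' := fun ha hb P hP => by simp [ha P hP, hb P hP]
  zero_mem' := fun P hP => by simp
  smul_mem' := fun c F hF P hP => by simp [smul_eval, hF P hP]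

/-- `I(Γ)_ℓ` : degree-`ℓ` homogeneous polynomials vanishing on `Γ`, as a `k`-subspace. -/
def gradedVanishing (k : Type*) [Field k] (n : ℕ)
    (Γ : Set (Projectivization k (Fin (n + 1) → k))) (ℓ : ℕ) :
    Submodule k (MvPolynomial (Fin (n + 1)) k) :=
  homogeneousSubmodule (Fin (n + 1)) k ℓ ⊓ evalVanishing k n Γ

/-- `I(Γ)` : the (homogeneous) vanishing ideal of `Γ`, i.e. polynomials vanishing
at every vector of every line belonging to `Γ`. -/
def vanishingIdeal (k : Type*) [Field k] (n : ℕ)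
    (Γ : Set (Projectivization k (Fin (n + 1) → k))) :
    Ideal (MvPolynomial (Fin (n + 1)) k) where
  carrier := {F | ∀ P ∈ Γ, ∀ c : k, eval (c • Projectivization.rep P) F = 0}
  add_mem' := fun ha hb P hP c => by simp [ha P hP c, hb P hP c]
  zero_mem' := fun P hP c => by simp
  smul_mem' := fun a F hF P hP c => by simp [smul_eq_mul, hF P hP c]

/-- `Φ(Γ)_ℓ` : completely decomposable degree-`ℓ` elements of `I(Γ)`. -/
def Phi (k : Type*) [Field k] (n : ℕ)
    (Γ : Set (Projectivization k (Fin (n + 1) → k))) (ℓ : ℕ) :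
    Set (MvPolynomial (Fin (n + 1)) k) :=
  {F | F ∈ gradedVanishing k n Γ ℓ ∧
    ∃ h : Fin ℓ → MvPolynomial (Fin (n + 1)) k,
      (∀ i, h i ≠ 0 ∧ (h i).IsHomogeneous 1) ∧ F = ∏ i, h i}

/-- `S₁Φ(Γ)_m` : products of a nonzero linear form with an element of `Φ(Γ)_m`. -/
def S1Phi (k : Type*) [Field k] (n : ℕ)
    (Γ : Set (Projectivization k (Fin (n + 1) → k))) (m : ℕ) :
    Set (MvPolynomial (Fin (n + 1)) k) :=
  {G | ∃ h F, h ≠ 0 ∧ MvPolynomial.IsHomogeneous h 1 ∧ F ∈ Phi k n Γ m ∧ G = h * F}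

/-- `λ_Γ(G)` : the number of points of `Γ` at which `G` vanishes. -/
def lambdaGamma (k : Type*) [Field k] (n : ℕ)
    (Γ : Set (Projectivization k (Fin (n + 1) → k)))
    (G : MvPolynomial (Fin (n + 1)) k) : ℕ :=
  Set.ncard {P ∈ Γ | eval (Projectivization.rep P) G = 0}

/-
Induction on the degree: for `ℓ ≥ 2` with `d ≤ ℓ n`, every form of degree `ℓ + 1` vanishing on `Γ`
lies in the ideal generated by `I(Γ)_ℓ`. Homogeneous components of elements of `I(Γ)` lie in `I(Γ)`
because `k` is infinite.

Linear general position provides separators: for any `≤ e n` points of `Γ` and a further point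
`P ∈ Γ`, a form of degree `e` vanishing on those points but not at `P` (a product of `e` linear
forms, each killing `n` of the points). Write `F = ∑ Xᵢ Gᵢ` and replace each `Gᵢ`, modulo
`I(Γ)_ℓ`, by its interpolant `∑_P Gᵢ(P) w_P` in separators `w_P` of degree `ℓ`; what remains is
`∑_P u_P w_P` with linear forms `u_P` vanishing at `P`. If `u(P) = 0` and `u` also vanishes on a
set `T` of at least `d - 1 - (ℓ - 1) n` points, pick a linear `y` with `y(P) = 1`, `y|_T = 0` and
a separator `v` of degree `ℓ - 1` for `P` against `Γ ∖ (T ∪ {P})`. Then `w_P - y v` and `u v` lie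
in `I(Γ)_ℓ`, and `u w_P = u (w_P - y v) + y (u v)`. When `d - 1 > (ℓ - 1) n`, an arbitrary linear
`u` with `u(P) = 0` is a combination of the dual basis of `P` and `n` further points of `Γ`, each
of which vanishes at `P` and at `n - 1` of those points, which is enough since `d ≤ ℓ n`.
-/

namespace MvPolynomial

section LinearForms

variable {σ R : Type*} [CommSemiring R] [Fintype σ] [DecidableEq σ]

def ofDual : Module.Dual R (σ → R) →ₗ[R] MvPolynomial σ R where
  toFun f := ∑ i, C (f (Pi.single i 1)) * X i
  map_add' f g := by simp [add_mul, Finset.sum_add_distrib]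
  map_smul' c f := by simp [Finset.mul_sum, smul_eq_C_mul, mul_assoc]

@[simp]
theorem eval_ofDual (f : Module.Dual R (σ → R)) (v : σ → R) : eval v (ofDual f) = f v := by
  rw [f.pi_apply_eq_sum_univ v]
  simp only [ofDual, LinearMap.coe_mk, AddHom.coe_mk, map_sum, map_mul, eval_C, eval_X]
  refine Finset.sum_congr rfl fun i _ => ?_
  rw [smul_eq_mul, mul_comm]
  congr 2
  ext j
  simp [Pi.single_apply, eq_comm]

theorem isHomogeneous_ofDual (f : Module.Dual R (σ → R)) : (ofDual f).IsHomogeneous 1 :=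
  IsHomogeneous.sum _ _ _ fun i _ => isHomogeneous_C_mul_X _ i

theorem exists_ofDual_eq {u : MvPolynomial σ R} (hu : u.IsHomogeneous 1) :
    ∃ f, ofDual f = u := by
  rw [← mem_homogeneousSubmodule, homogeneousSubmodule_one_eq_span_X,
    Submodule.mem_span_range_iff_exists_fun] at hu
  obtain ⟨c, rfl⟩ := hu
  exact ⟨∑ i, c i • LinearMap.proj i, by simp [ofDual, Pi.single_apply, smul_eq_C_mul]⟩

end LinearForms

theorem IsHomogeneous.eval_smul {σ R : Type*} [CommSemiring R] {F : MvPolynomial σ R} {e : ℕ}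
    (hF : F.IsHomogeneous e) (c : R) (v : σ → R) : eval (c • v) F = c ^ e * eval v F := by
  rw [F.as_sum, map_sum, map_sum, Finset.mul_sum]
  refine Finset.sum_congr rfl fun α hα => ?_
  simp only [eval_monomial, Pi.smul_apply, smul_eq_mul, mul_pow, Finsupp.prod_mul]
  rw [Finsupp.prod, Finset.prod_pow_eq_pow_sum, ← hF.degree_eq_sum_deg_support hα]
  ring

theorem eval_homogeneousComponent_eq_zero_of_eval_smul {R σ : Type*} [CommRing R] [IsDomain R]
    [Infinite R] {F : MvPolynomial σ R} {v : σ → R} (hF : ∀ c : R, eval (c • v) F = 0) (j : ℕ) :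
    eval v (homogeneousComponent j F) = 0 := by
  set p : Polynomial R := ∑ i ∈ Finset.range (F.totalDegree + 1),
    Polynomial.monomial i (eval v (homogeneousComponent i F))
  have hp : p = 0 := Polynomial.funext fun c => by
    rw [Polynomial.eval_zero, ← hF c, ← sum_homogeneousComponent F, map_sum,
      Polynomial.eval_finsetSum]
    refine Finset.sum_congr rfl fun i _ => ?_
    rw [Polynomial.eval_monomial, (homogeneousComponent_isHomogeneous i F).eval_smul, mul_comm]
  have hcoeff : p.coeff j = eval v (homogeneousComponent j F) := by
    rw [Polynomial.finsetSum_coeff]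
    simp only [Polynomial.coeff_monomial, Finset.sum_ite_eq', Finset.mem_range]
    split_ifs with hj
    · rfl
    · rw [homogeneousComponent_eq_zero _ _ (by omega), map_zero]
  rw [← hcoeff, hp, Polynomial.coeff_zero]

theorem IsHomogeneous.exists_eq_sum_X_mul {σ R : Type*} [CommSemiring R] [Fintype σ]
    {F : MvPolynomial σ R} {ℓ : ℕ} (hF : F.IsHomogeneous (ℓ + 1)) :
    ∃ G : σ → MvPolynomial σ R, (∀ i, (G i).IsHomogeneous ℓ) ∧ F = ∑ i, X i * G i := by
  rw [← mem_homogeneousSubmodule, ← homogeneousSubmodule_one_pow, pow_succ',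
    homogeneousSubmodule_one_pow] at hF
  refine Submodule.mul_induction_on hF (fun x hx G hG => ?_) fun F₁ F₂ h₁ h₂ => ?_
  · rw [homogeneousSubmodule_one_eq_span_X, Submodule.mem_span_range_iff_exists_fun] at hx
    obtain ⟨c, rfl⟩ := hx
    exact ⟨fun i => c i • G, fun i => Submodule.smul_mem _ (c i) hG,
      by simp [Finset.sum_mul]⟩
  · obtain ⟨G₁, hG₁, rfl⟩ := h₁
    obtain ⟨G₂, hG₂, rfl⟩ := h₂
    exact ⟨G₁ + G₂, fun i => (hG₁ i).add (hG₂ i), by simp [mul_add, Finset.sum_add_distrib]⟩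

end MvPolynomial

section Vanishing

variable {k : Type*} [Field k] {n : ℕ}

theorem gradedVanishing_le_vanishingIdeal {Γ : Set (Projectivization k (Fin (n + 1) → k))}
    {ℓ : ℕ} : gradedVanishing k n Γ ℓ ≤ (vanishingIdeal k n Γ).restrictScalars k := by
  intro F hF P hP c
  rw [hF.1.eval_smul, hF.2 P hP, mul_zero]

def IsSeparator (Γ : Finset (Projectivization k (Fin (n + 1) → k))) (ℓ : ℕ)
    (P : Projectivization k (Fin (n + 1) → k)) (w : MvPolynomial (Fin (n + 1)) k) : Prop :=
  w.IsHomogeneous ℓ ∧ eval P.rep w = 1 ∧ ∀ Q ∈ Γ, Q ≠ P → eval Q.rep w = 0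

theorem sub_sum_smul_mem_gradedVanishing {Γ : Finset (Projectivization k (Fin (n + 1) → k))}
    {ℓ : ℕ} {w : Γ → MvPolynomial (Fin (n + 1)) k} (hw : ∀ P : Γ, IsSeparator Γ ℓ P (w P))
    {G : MvPolynomial (Fin (n + 1)) k} (hG : G.IsHomogeneous ℓ) :
    G - ∑ P : Γ, eval P.1.rep G • w P ∈ gradedVanishing k n Γ ℓ := by
  refine ⟨hG.sub (IsHomogeneous.sum _ _ _ fun P _ =>
    (homogeneousSubmodule _ k ℓ).smul_mem _ (hw P).1), fun Q (hQ : Q ∈ Γ) => ?_⟩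
  simp only [map_sub, map_sum, smul_eval]
  rw [Finset.sum_eq_single ⟨Q, hQ⟩ (fun P _ hPQ => ?_) (by simp), (hw ⟨Q, hQ⟩).2.1, mul_one,
    sub_self]
  rw [(hw P).2.2 Q hQ fun h => hPQ (Subtype.ext h.symm), mul_zero]

end Vanishing

namespace LinGenPos

variable {k : Type*} [Field k] {n : ℕ} {Γ : Finset (Projectivization k (Fin (n + 1) → k))}

theorem exists_dual_separating (hlgp : LinGenPos k n Γ)
    {s : Finset (Projectivization k (Fin (n + 1) → k))} (hs : s ⊆ Γ) (hsn : s.card ≤ n)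
    {P : Projectivization k (Fin (n + 1) → k)} (hP : P ∈ Γ) (hPs : P ∉ s) :
    ∃ f : Module.Dual k (Fin (n + 1) → k), f P.rep = 1 ∧ ∀ Q ∈ s, f Q.rep = 0 := by
  classical
  have hli := hlgp (insert P s) (Finset.coe_subset.mpr (Finset.insert_subset hP hs))
    ((Finset.card_insert_le P s).trans (by omega))
  have hPspan := hli.notMem_span_image (x := ⟨P, Finset.mem_insert_self P s⟩)
    (s := {Q | Q.1 ∈ s}) hPs
  obtain ⟨f, hfP, hfs⟩ := Submodule.exists_dual_map_eq_bot_of_notMem hPspan inferInstance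
  refine ⟨(f P.rep)⁻¹ • f, inv_mul_cancel₀ hfP, fun Q hQ => ?_⟩
  have hQspan : Q.rep ∈ Submodule.span k ((fun p : ↥(insert P s) => p.1.rep) '' {Q | Q.1 ∈ s}) :=
    Submodule.subset_span ⟨⟨Q, Finset.mem_insert_of_mem hQ⟩, hQ, rfl⟩
  rw [LinearMap.smul_apply, LinearMap.mem_ker.mp (LinearMap.le_ker_iff_map.mpr hfs hQspan),
    smul_zero]

theorem exists_separating (hlgp : LinGenPos k n Γ) {P : Projectivization k (Fin (n + 1) → k)}
    (hP : P ∈ Γ) {s : Finset (Projectivization k (Fin (n + 1) → k))} (hs : s ⊆ Γ) (hPs : P ∉ s)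
    {e : ℕ} (hse : s.card ≤ e * n) : ∃ w : MvPolynomial (Fin (n + 1)) k,
      w.IsHomogeneous e ∧ eval P.rep w = 1 ∧ ∀ Q ∈ s, eval Q.rep w = 0 := by
  classical
  induction e generalizing s with
  | zero =>
    obtain rfl : s = ∅ := Finset.card_eq_zero.mp (by simpa using hse)
    exact ⟨1, isHomogeneous_one _ _, by simp, by simp⟩
  | succ e ih =>
    obtain ⟨t, hts, htcard⟩ := Finset.exists_subset_card_eq (min_le_right n s.card)
    obtain ⟨f, hfP, hft⟩ := hlgp.exists_dual_separating (hts.trans hs) (by omega) hP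
      fun h => hPs (hts h)
    have hcard : (s \ t).card ≤ e * n := by
      rw [Finset.card_sdiff_of_subset hts, htcard]
      rw [add_one_mul] at hse
      omega
    obtain ⟨w, hw, hwP, hws⟩ := ih (Finset.sdiff_subset.trans hs)
      (fun h => hPs (Finset.mem_sdiff.mp h).1) hcard
    refine ⟨w * MvPolynomial.ofDual f, hw.mul (MvPolynomial.isHomogeneous_ofDual f),
      by simp [hwP, hfP], fun Q hQ => ?_⟩
    by_cases hQt : Q ∈ t
    · simp [hft Q hQt]
    · simp [hws Q (Finset.mem_sdiff.mpr ⟨hQ, hQt⟩)]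

theorem exists_isSeparator (hlgp : LinGenPos k n Γ) {P : Projectivization k (Fin (n + 1) → k)}
    (hP : P ∈ Γ) {ℓ : ℕ} (hd : Γ.card ≤ ℓ * n + 1) : ∃ w, IsSeparator Γ ℓ P w := by
  classical
  obtain ⟨w, hw, hwP, hwQ⟩ := hlgp.exists_separating hP (Finset.erase_subset P Γ)
    (Finset.notMem_erase P Γ) (e := ℓ) (by rw [Finset.card_erase_of_mem hP]; omega)
  exact ⟨w, hw, hwP, fun Q hQ hQP => hwQ Q (Finset.mem_erase.mpr ⟨hQP, hQ⟩)⟩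

theorem mul_isSeparator_mem_span_of_vanishing (hlgp : LinGenPos k n Γ)
    {P : Projectivization k (Fin (n + 1) → k)} (hP : P ∈ Γ) {ℓ : ℕ}
    {w : MvPolynomial (Fin (n + 1)) k} (hw : IsSeparator Γ (ℓ + 1) P w)
    {T : Finset (Projectivization k (Fin (n + 1) → k))} (hTΓ : T ⊆ Γ) (hPT : P ∉ T)
    (hTn : T.card ≤ n) (hΓ : Γ.card ≤ T.card + ℓ * n + 1) {u : MvPolynomial (Fin (n + 1)) k}
    (hu : u.IsHomogeneous 1) (huP : eval P.rep u = 0) (huT : ∀ Q ∈ T, eval Q.rep u = 0) :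
    u * w ∈ Ideal.span (gradedVanishing k n Γ (ℓ + 1)) := by
  classical
  obtain ⟨y, hy, hyP, hyT⟩ := hlgp.exists_separating hP hTΓ hPT (e := 1) (by omega)
  have hcard : (Γ \ insert P T).card ≤ ℓ * n := by
    rw [Finset.card_sdiff_of_subset (Finset.insert_subset hP hTΓ), Finset.card_insert_of_notMem hPT]
    omega
  obtain ⟨v, hv, hvP, hvQ⟩ := hlgp.exists_separating hP Finset.sdiff_subset (by simp) hcard
  have hvQ' : ∀ Q ∈ Γ, Q ≠ P → Q ∉ T → eval Q.rep v = 0 := fun Q hQ hQP hQT =>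
    hvQ Q (by simp [hQ, hQP, hQT])
  have h₁ : w - v * y ∈ gradedVanishing k n Γ (ℓ + 1) := by
    refine ⟨hw.1.sub (hv.mul hy), fun Q (hQ : Q ∈ Γ) => ?_⟩
    by_cases hQP : Q = P
    · simp [hQP, hw.2.1, hyP, hvP]
    by_cases hQT : Q ∈ T
    · simp [hw.2.2 Q hQ hQP, hyT Q hQT]
    · simp [hw.2.2 Q hQ hQP, hvQ' Q hQ hQP hQT]
  have h₂ : v * u ∈ gradedVanishing k n Γ (ℓ + 1) := by
    refine ⟨hv.mul hu, fun Q (hQ : Q ∈ Γ) => ?_⟩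
    by_cases hQP : Q = P
    · simp [hQP, huP]
    by_cases hQT : Q ∈ T
    · simp [huT Q hQT]
    · simp [hvQ' Q hQ hQP hQT]
  have hsplit : u * w = u * (w - v * y) + y * (v * u) := by ring
  rw [hsplit]
  exact add_mem (Ideal.mul_mem_left _ _ (Ideal.subset_span h₁))
    (Ideal.mul_mem_left _ _ (Ideal.subset_span h₂))

theorem mul_isSeparator_mem_span (hlgp : LinGenPos k n Γ) {ℓ : ℕ} (hℓ : 1 ≤ ℓ)
    (hd : Γ.card ≤ (ℓ + 1) * n) {P : Projectivization k (Fin (n + 1) → k)} (hP : P ∈ Γ)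
    {w : MvPolynomial (Fin (n + 1)) k} (hw : IsSeparator Γ (ℓ + 1) P w)
    {u : MvPolynomial (Fin (n + 1)) k} (hu : u.IsHomogeneous 1) (huP : eval P.rep u = 0) :
    u * w ∈ Ideal.span (gradedVanishing k n Γ (ℓ + 1)) := by
  classical
  by_cases hsmall : Γ.card ≤ ℓ * n + 1
  · exact hlgp.mul_isSeparator_mem_span_of_vanishing hP hw (Finset.empty_subset Γ)
      (Finset.notMem_empty P) (by simp) (by simpa using hsmall) hu huP (by simp)
  have hnℓ : n ≤ ℓ * n := Nat.le_mul_of_pos_left n hℓ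
  rw [add_one_mul] at hd
  obtain ⟨Q, hQΓ, hQcard⟩ := Finset.exists_subset_card_eq (s := Γ.erase P) (n := n)
    (by rw [Finset.card_erase_of_mem hP]; omega)
  have hPQ : P ∉ Q := fun h => Finset.notMem_erase P Γ (hQΓ h)
  have hQΓ' : Q ⊆ Γ := hQΓ.trans (Finset.erase_subset P Γ)
  have hScard : (insert P Q).card = n + 1 := by rw [Finset.card_insert_of_notMem hPQ, hQcard]
  have hli := hlgp (insert P Q) (Finset.coe_subset.mpr (Finset.insert_subset hP hQΓ'))
    hScard.le
  have : Nonempty ↥(insert P Q) := ⟨⟨P, Finset.mem_insert_self P Q⟩⟩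
  let b := basisOfLinearIndependentOfCardEqFinrank hli (by simp [hScard])
  have hb : ∀ R, b R = R.1.rep := congrFun (coe_basisOfLinearIndependentOfCardEqFinrank hli _)
  have hcoord : ∀ R R' : ↥(insert P Q), R' ≠ R → b.coord R R'.1.rep = 0 := fun R R' hR'R => by
    rw [← hb, Module.Basis.coord_apply, Module.Basis.repr_self, Finsupp.single_apply,
      if_neg hR'R]
  obtain ⟨f, rfl⟩ := MvPolynomial.exists_ofDual_eq hu
  rw [MvPolynomial.eval_ofDual] at huP
  rw [← b.sum_dual_apply_smul_coord f, map_sum, Finset.sum_mul]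
  refine Ideal.sum_mem _ fun R _ =>
    hlgp.mul_isSeparator_mem_span_of_vanishing hP hw (T := Q.erase R)
      ((Finset.erase_subset _ _).trans hQΓ') (fun h => hPQ (Finset.mem_of_mem_erase h))
      (Finset.card_erase_le.trans hQcard.le)
      (by have := Finset.pred_card_le_card_erase (s := Q) (a := R.1); omega)
      (MvPolynomial.isHomogeneous_ofDual _) ?_ fun Q' hQ' => ?_
  · by_cases hRP : R = ⟨P, Finset.mem_insert_self P Q⟩
    · simp [hRP, hb, huP]
    · simp [hcoord R ⟨P, Finset.mem_insert_self P Q⟩ (Ne.symm hRP)]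
  · have hQ'R := Finset.ne_of_mem_erase hQ'
    simp [hcoord R ⟨Q', Finset.mem_insert_of_mem (Finset.mem_of_mem_erase hQ')⟩
      fun h => hQ'R (congrArg Subtype.val h)]

theorem gradedVanishing_succ_le_span (hlgp : LinGenPos k n Γ) {ℓ : ℕ} (hℓ : 2 ≤ ℓ)
    (hd : Γ.card ≤ ℓ * n) :
    gradedVanishing k n Γ (ℓ + 1) ≤ (Ideal.span
      (gradedVanishing k n Γ ℓ : Set (MvPolynomial (Fin (n + 1)) k))).restrictScalars k := by
  obtain ⟨ℓ, rfl⟩ : ∃ ℓ', ℓ = ℓ' + 1 := ⟨ℓ - 1, by omega⟩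
  intro F hF
  choose w hw using fun P : Γ => hlgp.exists_isSeparator P.2 (ℓ := ℓ + 1) (by omega)
  obtain ⟨G, hG, rfl⟩ := hF.1.exists_eq_sum_X_mul
  have hsplit : ∑ i, X i * G i = ∑ i, X i * (G i - ∑ P : Γ, eval P.1.rep (G i) • w P) +
      ∑ P : Γ, (∑ i, eval P.1.rep (G i) • X i) * w P := by
    simp only [mul_sub, Finset.mul_sum, Finset.sum_mul, Finset.sum_sub_distrib, smul_mul_assoc,
      mul_smul_comm]
    rw [Finset.sum_comm (s := Finset.univ (α := Γ))]
    abel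
  rw [hsplit]
  refine add_mem (Ideal.sum_mem _ fun i _ => Ideal.mul_mem_left _ _
    (Ideal.subset_span (sub_sum_smul_mem_gradedVanishing hw (hG i))))
    (Ideal.sum_mem _ fun P _ => hlgp.mul_isSeparator_mem_span (by omega) hd P.2 (hw P) ?_ ?_)
  · exact (homogeneousSubmodule _ k 1).sum_mem fun i _ => Submodule.smul_mem _ _
      (isHomogeneous_X k i)
  · simpa [smul_eval, mul_comm] using hF.2 P P.2

theorem gradedVanishing_le_span (hlgp : LinGenPos k n Γ) {m : ℕ} (hm : 2 ≤ m)
    (hd : Γ.card ≤ m * n) (ℓ : ℕ) :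
    gradedVanishing k n Γ ℓ ≤ (Ideal.span
      {F | F ∈ vanishingIdeal k n Γ ∧ ∃ j ≤ m, F.IsHomogeneous j}).restrictScalars k := by
  induction ℓ with
  | zero =>
    exact fun F hF => Ideal.subset_span
      ⟨gradedVanishing_le_vanishingIdeal hF, 0, Nat.zero_le m, hF.1⟩
  | succ ℓ ih =>
    by_cases hℓ : ℓ + 1 ≤ m
    · exact fun F hF => Ideal.subset_span ⟨gradedVanishing_le_vanishingIdeal hF, _, hℓ, hF.1⟩
    · exact (hlgp.gradedVanishing_succ_le_span (by omega)
        (hd.trans (Nat.mul_le_mul_right n (by omega)))).trans (Ideal.span_le.mpr ih)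

end LinGenPos

theorem generated_in_degree_le_m_general (k : Type*) [Field k] [IsAlgClosed k] (n d m : ℕ)
    (hm : 2 ≤ m) (Γ : Set (Projectivization k (Fin (n + 1) → k)))
    (hfin : Γ.Finite) (hcard : Γ.ncard = d) (hlgp : LinGenPos k n Γ) (hd : d ≤ m * n) :
    vanishingIdeal k n Γ =
      Ideal.span {F | F ∈ vanishingIdeal k n Γ ∧ ∃ j ≤ m, F.IsHomogeneous j} := by
  obtain ⟨Γ, rfl⟩ := hfin.exists_finset_coe
  rw [Set.ncard_coe_finset] at hcard
  refine le_antisymm (fun F hF => ?_) (Ideal.span_le.mpr fun F hF => hF.1)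
  rw [← sum_homogeneousComponent F]
  exact Ideal.sum_mem _ fun j _ => hlgp.gradedVanishing_le_span hm (hcard ▸ hd) j
    ⟨homogeneousComponent_isHomogeneous j F,
      fun P hP => eval_homogeneousComponent_eq_zero_of_eval_smul (hF P hP) j⟩

/-- If `Γ ⊆ ℙⁿ` is a finite set of `d` points in linearly general position and `d ≤ mn`
with `m ≥ 2`, then `I(Γ)` is generated by its homogeneous elements of degree at most `m`. -/
theorem generated_in_degree_le_m (k : Type*) [Field k] [IsAlgClosed k] (n d m : ℕ)
    (hn : 1 ≤ n) (hm : 2 ≤ m) (Γ : Set (Projectivization k (Fin (n + 1) → k)))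
    (hfin : Γ.Finite) (hcard : Γ.ncard = d) (hlgp : LinGenPos k n Γ) (hd : d ≤ m * n) :
    vanishingIdeal k n Γ =
      Ideal.span {F | F ∈ vanishingIdeal k n Γ ∧ ∃ j ≤ m, F.IsHomogeneous j} :=
  generated_in_degree_le_m_general k n d m hm Γ hfin hcard hlgp hd
end
end

section
/- Let Γ ⊆ Pⁿ be a finite set of exactly d = mn points in linearly general position, for some integer m ≥ 2. Then Φ(Γ)_m generates I(Γ)_m as a k-vector space; that is, every degree-m homogeneous polynomial vanishing on Γ is a k-linear combination of completely decomposable degree-m forms vanishing on Γ. -/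
open MvPolynomial

noncomputable section

/-!
Induction on `m`, the case `m = 1` being trivial. For `#Γ = (m + 1) n`, take a linear functional
`f` on polynomials that kills `Φ(Γ)_{m+1}`. For every `n`-subset `B ⊆ Γ` let `λ_B` be the linear
form cutting out the hyperplane spanned by `B`; by induction `I(Γ \ B)_m` is spanned by
`Φ(Γ \ B)_m`, so `f` kills `λ_B · I(Γ \ B)_m`, hence `G ↦ f (λ_B G)` is a combination
`∑_{w ∉ B} c_B(w) G(w)` of evaluations. Points in linearly general position impose independent
conditions (separating forms are products of linear forms), so comparing the two expansions of
`f (λ_B λ_{B'} G)` for blocks meeting in at most one point shows that `c_B(w) / λ_B(w)` does not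
depend on `B`; any two blocks are joined by a chain of such pairs. Calling this ratio `d(w)`, we get
`f (λ G) = ∑ d(w) (λ G)(w)` first for the forms `λ_B`, which span all linear forms, then for all
degree `m + 1` forms. So `f` is a combination of evaluations at `Γ` and vanishes on `I(Γ)_{m+1}`.
-/

open Finset

section LinearForm

variable {σ k : Type*} [Fintype σ] [DecidableEq σ] [Field k]

def linearForm : Module.Dual k (σ → k) →ₗ[k] MvPolynomial σ k where
  toFun φ := ∑ i, C (φ (Pi.single i 1)) * X i
  map_add' φ ψ := by simp [add_mul, sum_add_distrib]
  map_smul' a φ := by simp [mul_sum, smul_eq_C_mul, mul_assoc]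

theorem eval_linearForm (φ : Module.Dual k (σ → k)) (w : σ → k) :
    eval w (linearForm φ) = φ w := by
  conv_rhs => rw [← univ_sum_single w, map_sum]
  simp only [linearForm, LinearMap.coe_mk, AddHom.coe_mk, map_sum, map_mul, eval_C, eval_X]
  refine sum_congr rfl fun i _ => ?_
  rw [mul_comm, ← smul_eq_mul, ← map_smul, ← Pi.single_smul', smul_eq_mul, mul_one]

theorem isHomogeneous_linearForm (φ : Module.Dual k (σ → k)) :
    (linearForm φ).IsHomogeneous 1 :=
  IsHomogeneous.sum _ _ _ fun i _ => isHomogeneous_C_mul_X _ i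

theorem isHomogeneous_linearForm_mul (φ : Module.Dual k (σ → k)) {G : MvPolynomial σ k} {ℓ : ℕ}
    (hG : G.IsHomogeneous ℓ) : (linearForm φ * G).IsHomogeneous (ℓ + 1) :=
  add_comm 1 ℓ ▸ (isHomogeneous_linearForm φ).mul hG

theorem linearForm_ne_zero {φ : Module.Dual k (σ → k)} (hφ : φ ≠ 0) : linearForm φ ≠ 0 := by
  contrapose! hφ
  ext w
  simp [← eval_linearForm, hφ]

theorem linearForm_proj (i : σ) :
    linearForm (LinearMap.proj i : Module.Dual k (σ → k)) = X i := by
  simp [linearForm, Pi.single_apply]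

end LinearForm

theorem homogeneousSubmodule_succ_le_iSup_map_mulLeft_X (σ R : Type*) [CommSemiring R] (m : ℕ) :
    homogeneousSubmodule σ R (m + 1) ≤
      ⨆ i, (homogeneousSubmodule σ R m).map (LinearMap.mulLeft R (X i)) := by
  rw [homogeneousSubmodule_eq_finsupp_supported, AddMonoidAlgebra.supported_eq_span_single,
    Submodule.span_le]
  rintro _ ⟨d, hd, rfl⟩
  simp only [Set.mem_ofPred_eq] at hd
  obtain ⟨i, hi⟩ : ∃ i, d i ≠ 0 := by
    by_contra! h
    simp [show d = 0 from Finsupp.ext h] at hd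
  have hsplit : d = Finsupp.single i 1 + (d - Finsupp.single i 1) :=
    (add_tsub_cancel_of_le (Finsupp.single_le_iff.mpr (Nat.one_le_iff_ne_zero.mpr hi))).symm
  refine Submodule.mem_iSup_of_mem i ⟨monomial (d - Finsupp.single i 1) 1, ?_, ?_⟩
  · refine isHomogeneous_monomial _ ?_
    have : d.degree = 1 + (d - Finsupp.single i 1).degree := by
      conv_lhs => rw [hsplit]
      rw [map_add, Finsupp.degree_single]
    omega
  · rw [LinearMap.mulLeft_apply, ← pow_one (X i), ← monomial_single_add, ← hsplit]
    exact (single_eq_monomial d 1).symm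

theorem apply_eq_zero_of_forall_linearForm_mul {σ k : Type*} [Fintype σ] [DecidableEq σ] [Field k]
    {S : Set (Module.Dual k (σ → k))} (hS : Submodule.span k S = ⊤)
    {g : MvPolynomial σ k →ₗ[k] k} {m : ℕ}
    (hg : ∀ φ ∈ S, ∀ G : MvPolynomial σ k, G.IsHomogeneous m → g (linearForm φ * G) = 0)
    {F : MvPolynomial σ k} (hF : F.IsHomogeneous (m + 1)) : g F = 0 := by
  have hall (φ : Module.Dual k (σ → k)) (G : MvPolynomial σ k) (hG : G.IsHomogeneous m) :
      g (linearForm φ * G) = 0 := by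
    have := LinearMap.ext_on hS (f := g ∘ₗ LinearMap.mulRight k G ∘ₗ linearForm) (g := 0)
      fun φ hφ => hg φ hφ G hG
    exact LinearMap.congr_fun this φ
  have hle : ⨆ i, (homogeneousSubmodule σ k m).map (LinearMap.mulLeft k (X i)) ≤
      LinearMap.ker g := by
    refine iSup_le fun i => ?_
    rintro _ ⟨G, hG, rfl⟩
    simpa [linearForm_proj] using hall (LinearMap.proj i) G hG
  exact hle (homogeneousSubmodule_succ_le_iSup_map_mulLeft_X σ k m hF)

theorem exists_eq_sum_eval_of_vanishing {σ ι k : Type*} [Field k] (s : Finset ι)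
    (v : ι → σ → k) (ℓ : ℕ) (g : MvPolynomial σ k →ₗ[k] k)
    (hg : ∀ G : MvPolynomial σ k, G.IsHomogeneous ℓ → (∀ i ∈ s, eval (v i) G = 0) → g G = 0) :
    ∃ c : ι → k, ∀ G : MvPolynomial σ k, G.IsHomogeneous ℓ →
      g G = ∑ i ∈ s, c i * eval (v i) G := by
  classical
  let L (i : s) : Module.Dual k (MvPolynomial σ k) :=
    (aeval (v i)).toLinearMap ∘ₗ homogeneousComponent ℓ
  have hker : ⨅ i, LinearMap.ker (L i) ≤ LinearMap.ker (g ∘ₗ homogeneousComponent ℓ) := by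
    intro G hG
    simp only [Submodule.mem_iInf, LinearMap.mem_ker] at hG ⊢
    exact hg _ (homogeneousComponent_isHomogeneous ℓ G) fun i hi => by simpa [L] using hG ⟨i, hi⟩
  obtain ⟨c, hc⟩ := (Submodule.mem_span_range_iff_exists_fun k).mp
    (mem_span_of_iInf_ker_le_ker hker)
  refine ⟨fun i => if h : i ∈ s then c ⟨i, h⟩ else 0, fun G hG => ?_⟩
  rw [← sum_attach]
  simpa [L, homogeneousComponent_of_mem hG] using (LinearMap.congr_fun hc G).symm

theorem Module.Dual.span_range_eq_top_of_apply_self_ne_zero {K V ι : Type*} [Field K]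
    [AddCommGroup V] [Module K V] [FiniteDimensional K V] [Fintype ι] (v : ι → V)
    (ψ : ι → Module.Dual K V) (hcard : Fintype.card ι = Module.finrank K V)
    (hself : ∀ i, ψ i (v i) ≠ 0) (hne : ∀ i j, i ≠ j → ψ i (v j) = 0) :
    Submodule.span K (Set.range ψ) = ⊤ := by
  classical
  refine LinearIndependent.span_eq_top_of_card_eq_finrank' ?_
    (hcard.trans Subspace.dual_finrank_eq.symm)
  rw [linearIndependent_iff']
  intro s g hg i hi
  have := LinearMap.congr_fun hg (v i)
  simp only [LinearMap.sum_apply, LinearMap.smul_apply, smul_eq_mul,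
    LinearMap.zero_apply] at this
  rw [sum_eq_single_of_mem i hi fun j _ hji => by rw [hne j i hji, mul_zero]] at this
  exact (mul_eq_zero.mp this).resolve_right (hself i)

section Exchange

variable {α : Type*} [DecidableEq α] {A B : Finset α} {n : ℕ}

theorem Finset.exists_mem_powersetCard_card_inter_le_one (hA : 2 * n ≤ #A + 1)
    (hB : B ∈ A.powersetCard n) {x y : α} (hx : x ∈ B) (hyB : y ∉ B) :
    ∃ Z ∈ A.powersetCard n, #(B ∩ Z) ≤ 1 ∧ #(Z ∩ insert y (B.erase x)) ≤ 1 := by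
  rw [mem_powersetCard] at hB
  obtain ⟨C, hC, hCcard⟩ : ∃ C ⊆ A \ B, #C = n - 1 :=
    exists_subset_card_eq (by rw [card_sdiff_of_subset hB.1]; omega)
  have hCB : ∀ z ∈ C, z ∉ B := fun z hz => (mem_sdiff.mp (hC hz)).2
  have hxC : x ∉ C := fun h => hCB x h hx
  refine ⟨insert x C, ?_, (card_le_card fun z hz => ?_).trans (card_singleton x).le,
    (card_le_card fun z hz => ?_).trans (card_singleton y).le⟩
  · rw [mem_powersetCard, card_insert_of_notMem hxC, hCcard]
    refine ⟨insert_subset (hB.1 hx) (hC.trans sdiff_subset), ?_⟩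
    have := card_pos.mpr ⟨x, hx⟩
    omega
  · rw [mem_inter, mem_insert] at hz
    rcases hz with ⟨hzB, rfl | hzC⟩
    · exact mem_singleton_self z
    · exact absurd hzB (hCB z hzC)
  · rw [mem_inter, mem_insert, mem_insert, mem_erase] at hz
    rcases hz with ⟨rfl | hzC, rfl | ⟨hzx, hzB⟩⟩
    · exact absurd hx hyB
    · exact absurd rfl hzx
    · exact mem_singleton_self z
    · exact absurd hzB (hCB z hzC)

theorem Finset.insert_erase_mem_powersetCard (hB : B ∈ A.powersetCard n) {x y : α} (hx : x ∈ B)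
    (hyA : y ∈ A) (hyB : y ∉ B) : insert y (B.erase x) ∈ A.powersetCard n := by
  rw [mem_powersetCard] at hB ⊢
  rw [card_insert_of_notMem fun h => hyB (mem_of_mem_erase h), card_erase_of_mem hx, hB.2,
    Nat.sub_add_cancel (card_pos.mpr ⟨x, hx⟩ |>.trans_eq hB.2)]
  exact ⟨insert_subset hyA ((erase_subset x B).trans hB.1), rfl⟩

theorem Finset.eq_on_powersetCard_of_card_inter_le_one {β : Type*} (hA : 2 * n ≤ #A + 1)
    (r : Finset α → β)
    (hr : ∀ B ∈ A.powersetCard n, ∀ B' ∈ A.powersetCard n, #(B ∩ B') ≤ 1 → r B = r B')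
    {B' : Finset α} (hB : B ∈ A.powersetCard n) (hB' : B' ∈ A.powersetCard n) :
    r B = r B' := by
  induction hN : #(B \ B') generalizing B with
  | zero =>
    rw [card_eq_zero, sdiff_eq_empty_iff_subset] at hN
    rw [mem_powersetCard] at hB hB'
    rw [eq_of_subset_of_card_le hN (by omega)]
  | succ N ih =>
    by_cases hint : #(B ∩ B') ≤ 1
    · exact hr B hB B' hB' hint
    obtain ⟨x, hx⟩ : (B \ B').Nonempty := card_pos.mp (by omega)
    obtain ⟨y, hy⟩ : (B' \ B).Nonempty := card_pos.mp (by
      rw [← card_sdiff_comm ((mem_powersetCard.mp hB).2.trans (mem_powersetCard.mp hB').2.symm)]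
      omega)
    rw [mem_sdiff] at hx hy
    obtain ⟨Z, hZ, hBZ, hZT⟩ := exists_mem_powersetCard_card_inter_le_one hA hB hx.1 hy.2
    have hT := insert_erase_mem_powersetCard hB hx.1 ((mem_powersetCard.mp hB').1 hy.1) hy.2
    have hTB' : insert y (B.erase x) \ B' = (B \ B').erase x := by
      ext z
      simp only [mem_sdiff, mem_insert, mem_erase]
      grind
    calc r B = r Z := hr B hB Z hZ hBZ
      _ = r (insert y (B.erase x)) := hr Z hZ _ hT hZT
      _ = r B' := ih hT (by rw [hTB', card_erase_of_mem (mem_sdiff.mpr hx), hN]; rfl)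

end Exchange

open Projectivization (rep)

section GeneralPosition

variable {k : Type*} [Field k] {n : ℕ}

local notation "ℙ" => Projectivization k (Fin (n + 1) → k)
local notation "𝕍" => Fin (n + 1) → k

theorem linearForm_mul_mem_Phi {Γ Γ' : Set ℙ} {m : ℕ} {φ : Module.Dual k 𝕍} (hφ0 : φ ≠ 0)
    (hφ : ∀ P ∈ Γ, P ∉ Γ' → φ (rep P) = 0) {D : MvPolynomial (Fin (n + 1)) k}
    (hD : D ∈ Phi k n Γ' m) : linearForm φ * D ∈ Phi k n Γ (m + 1) := by
  obtain ⟨⟨hDhom, hDvan⟩, g, hg, rfl⟩ := hD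
  refine ⟨⟨?_, fun P hP => ?_⟩, Fin.cons (linearForm φ) g, Fin.cases ?_ hg,
    (Fin.prod_cons _ _).symm⟩
  · exact isHomogeneous_linearForm_mul φ hDhom
  · by_cases hP' : P ∈ Γ'
    · simp [hDvan P hP']
    · simp [eval_linearForm, hφ P hP hP']
  · exact ⟨linearForm_ne_zero hφ0, isHomogeneous_linearForm φ⟩

theorem linearForm_mul_mem_span_Phi {Γ Γ' : Set ℙ} {m : ℕ} {φ : Module.Dual k 𝕍}
    (hφ : ∀ P ∈ Γ, P ∉ Γ' → φ (rep P) = 0) {G : MvPolynomial (Fin (n + 1)) k}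
    (hG : G ∈ Submodule.span k (Phi k n Γ' m)) :
    linearForm φ * G ∈ Submodule.span k (Phi k n Γ (m + 1)) := by
  rcases eq_or_ne φ 0 with rfl | hφ0
  · simp
  have hle : Submodule.span k (Phi k n Γ' m) ≤
      (Submodule.span k (Phi k n Γ (m + 1))).comap (LinearMap.mulLeft k (linearForm φ)) :=
    Submodule.span_le.mpr fun D hD => Submodule.subset_span (linearForm_mul_mem_Phi hφ0 hφ hD)
  exact hle hG

theorem span_Phi_le (Γ : Set ℙ) (m : ℕ) :
    Submodule.span k (Phi k n Γ m) ≤ gradedVanishing k n Γ m :=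
  Submodule.span_le.mpr fun _ hF => hF.1

theorem span_Phi_one (Γ : Set ℙ) : Submodule.span k (Phi k n Γ 1) = gradedVanishing k n Γ 1 := by
  refine (span_Phi_le Γ 1).antisymm fun F hF => ?_
  rcases eq_or_ne F 0 with rfl | hF0
  · exact Submodule.zero_mem _
  exact Submodule.subset_span ⟨hF, fun _ => F, fun _ => ⟨hF0, hF.1⟩, by simp⟩

theorem LinGenPos.mono {Γ Γ' : Set ℙ} (h : LinGenPos k n Γ) (h' : Γ' ⊆ Γ) : LinGenPos k n Γ' :=
  fun s hs hcard => h s (hs.trans h') hcard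

variable {Γ : Finset (Projectivization k (Fin (n + 1) → k))}

theorem LinGenPos.linearIndepOn (h : LinGenPos k n ↑Γ) {s : Finset ℙ} (hs : s ⊆ Γ)
    (hcard : #s ≤ n + 1) : LinearIndepOn k rep (s : Set ℙ) :=
  h s (coe_subset.mpr hs) hcard

theorem LinGenPos.exists_dual_eq_zero_ne_zero (h : LinGenPos k n ↑Γ) {T : Finset ℙ} (hT : T ⊆ Γ)
    (hcard : #T ≤ n) {w : ℙ} (hw : w ∈ Γ) (hwT : w ∉ T) :
    ∃ φ : Module.Dual k 𝕍, (∀ P ∈ T, φ (rep P) = 0) ∧ φ (rep w) ≠ 0 := by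
  classical
  have hli := h.linearIndepOn (insert_subset hw hT) ((card_insert_le w T).trans (by omega))
  rw [coe_insert, linearIndepOn_insert (mod_cast hwT)] at hli
  obtain ⟨φ, hφw, hφT⟩ := Submodule.exists_dual_map_eq_bot_of_notMem hli.2 inferInstance
  rw [← LinearMap.le_ker_iff_map, Submodule.span_le] at hφT
  exact ⟨φ, fun P hP => hφT ⟨P, hP, rfl⟩, hφw⟩

theorem LinGenPos.eq_zero_of_apply_eq_zero (h : LinGenPos k n ↑Γ) {s : Finset ℙ} (hs : s ⊆ Γ)
    (hcard : #s = n + 1) {φ : Module.Dual k 𝕍} (hφ : ∀ P ∈ s, φ (rep P) = 0) : φ = 0 := by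
  have hspan := (h.linearIndepOn hs hcard.le).span_eq_top_of_card_eq_finrank'
    (by simp [hcard])
  rw [← Set.image_eq_range] at hspan
  exact LinearMap.ext_on hspan (by rintro _ ⟨P, hP, rfl⟩; exact hφ P hP)

theorem LinGenPos.exists_dual_apply_eq_zero_iff (h : LinGenPos k n ↑Γ) {B : Finset ℙ}
    (hB : B ⊆ Γ) (hcard : #B = n) :
    ∃ φ : Module.Dual k 𝕍, ∀ P ∈ Γ, φ (rep P) = 0 ↔ P ∈ B := by
  classical
  by_cases hΓB : Γ ⊆ B
  · exact ⟨0, fun P hP => iff_of_true rfl (hΓB hP)⟩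
  obtain ⟨w, hw, hwB⟩ := not_subset.mp hΓB
  obtain ⟨φ, hφB, hφw⟩ := h.exists_dual_eq_zero_ne_zero hB hcard.le hw hwB
  refine ⟨φ, fun P hP => ⟨fun hφP => ?_, hφB P⟩⟩
  by_contra hPB
  have hφPB : ∀ Q ∈ insert P B, φ (rep Q) = 0 := by
    simpa [forall_mem_insert] using ⟨hφP, hφB⟩
  exact hφw (by rw [h.eq_zero_of_apply_eq_zero (insert_subset hP hB)
    (by rw [card_insert_of_notMem hPB, hcard]) hφPB, LinearMap.zero_apply])

theorem LinGenPos.exists_separator (ℓ : ℕ) {Δ : Finset ℙ} (h : LinGenPos k n ↑Δ)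
    (hcard : #Δ ≤ ℓ * n + 1) {w : ℙ} (hw : w ∈ Δ) :
    ∃ F : MvPolynomial (Fin (n + 1)) k, F.IsHomogeneous ℓ ∧
      (∀ u ∈ Δ, u ≠ w → eval (rep u) F = 0) ∧ eval (rep w) F ≠ 0 := by
  classical
  induction ℓ generalizing Δ with
  | zero =>
    refine ⟨1, isHomogeneous_one _ _, fun u hu hne => absurd ?_ hne, by simp⟩
    exact card_le_one.mp (by omega) u hu w hw
  | succ ℓ ih =>
    obtain ⟨T, hT, hTcard⟩ := exists_subset_card_eq (min_le_right n #(Δ.erase w))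
    have hwT : w ∉ T := fun hwT => notMem_erase w Δ (hT hwT)
    have hTΔ : T ⊆ Δ := hT.trans (erase_subset w Δ)
    obtain ⟨φ, hφT, hφw⟩ :=
      h.exists_dual_eq_zero_ne_zero hTΔ (hTcard.trans_le (min_le_left _ _)) hw hwT
    have hcard' : #(Δ \ T) ≤ ℓ * n + 1 := by
      rw [card_sdiff_of_subset hTΔ]
      rw [card_erase_of_mem hw] at hTcard
      rcases min_cases n (#Δ - 1) with ⟨hmin, -⟩ | ⟨hmin, -⟩ <;> rw [hmin] at hTcard
      · rw [add_mul] at hcard; omega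
      · omega
    obtain ⟨F, hF, hFvan, hFw⟩ :=
      ih (h.mono (coe_subset.mpr sdiff_subset)) hcard' (mem_sdiff.mpr ⟨hw, hwT⟩)
    refine ⟨linearForm φ * F, isHomogeneous_linearForm_mul φ hF,
      fun u hu hne => ?_, by simp [eval_linearForm, hφw, hFw]⟩
    by_cases huT : u ∈ T
    · simp [eval_linearForm, hφT u huT]
    · simp [hFvan u (mem_sdiff.mpr ⟨hu, huT⟩) hne]

theorem LinGenPos.eq_zero_of_forall_sum_eval_eq_zero {ℓ : ℕ} {Δ : Finset ℙ} (h : LinGenPos k n ↑Δ)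
    (hcard : #Δ ≤ ℓ * n + 1) {a : ℙ → k}
    (ha : ∀ G : MvPolynomial (Fin (n + 1)) k, G.IsHomogeneous ℓ →
      ∑ w ∈ Δ, a w * eval (rep w) G = 0) {w : ℙ} (hw : w ∈ Δ) : a w = 0 := by
  obtain ⟨F, hF, hFvan, hFw⟩ := h.exists_separator ℓ hcard hw
  have := ha F hF
  rw [sum_eq_single_of_mem w hw fun u hu hne => by rw [hFvan u hu hne, mul_zero]] at this
  exact (mul_eq_zero.mp this).resolve_right hFw

section Blocks

variable [DecidableEq (Projectivization k (Fin (n + 1) → k))]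
  {f : MvPolynomial (Fin (n + 1)) k →ₗ[k] k} {ℓ : ℕ}

theorem LinGenPos.coeff_mul_apply_eq_of_card_inter_le_one (h : LinGenPos k n ↑Γ)
    (hcard : #Γ = (ℓ + 2) * n)
    {B B' : Finset ℙ} (hB : B ⊆ Γ) (hB' : B' ⊆ Γ) (hBcard : #B = n) (hB'card : #B' = n)
    (hint : #(B ∩ B') ≤ 1) {φ φ' : Module.Dual k 𝕍} (hφ : ∀ P ∈ B, φ (rep P) = 0)
    (hφ' : ∀ P ∈ B', φ' (rep P) = 0) {c c' : ℙ → k}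
    (hc : ∀ G : MvPolynomial (Fin (n + 1)) k, G.IsHomogeneous (ℓ + 1) →
      f (linearForm φ * G) = ∑ w ∈ Γ \ B, c w * eval (rep w) G)
    (hc' : ∀ G : MvPolynomial (Fin (n + 1)) k, G.IsHomogeneous (ℓ + 1) →
      f (linearForm φ' * G) = ∑ w ∈ Γ \ B', c' w * eval (rep w) G)
    {w : ℙ} (hw : w ∈ Γ \ (B ∪ B')) : c w * φ' (rep w) = c' w * φ (rep w) := by
  have hΔcard : #(Γ \ (B ∪ B')) ≤ ℓ * n + 1 := by
    have := card_union_add_card_inter B B'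
    rw [card_sdiff_of_subset (union_subset hB hB'), hcard, add_mul]
    omega
  -- `f (linearForm φ * linearForm φ' * G)` expands in two ways; points of `B ∪ B'` contribute 0.
  have hrestrict : ∀ (B₀ B₁ : Finset ℙ) (ψ : Module.Dual k 𝕍), (∀ P ∈ B₁, ψ (rep P) = 0) →
      ∀ (a : ℙ → k) (G : MvPolynomial (Fin (n + 1)) k),
      ∑ w ∈ Γ \ B₀, a w * eval (rep w) (linearForm ψ * G) =
        ∑ w ∈ Γ \ (B₀ ∪ B₁), a w * ψ (rep w) * eval (rep w) G := by
    intro B₀ B₁ ψ hψ a G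
    calc ∑ w ∈ Γ \ B₀, a w * eval (rep w) (linearForm ψ * G)
        = ∑ w ∈ Γ \ B₀, a w * ψ (rep w) * eval (rep w) G :=
          sum_congr rfl fun w _ => by rw [map_mul, eval_linearForm, mul_assoc]
      _ = _ := by
        refine (sum_subset (sdiff_subset_sdiff le_rfl subset_union_left) fun P hP hP' => ?_).symm
        have hPB₁ : P ∈ B₁ := by simp_all
        rw [hψ P hPB₁, mul_zero, zero_mul]
  have hsum : ∀ G : MvPolynomial (Fin (n + 1)) k, G.IsHomogeneous ℓ →
      ∑ w ∈ Γ \ (B ∪ B'), (c w * φ' (rep w) - c' w * φ (rep w)) * eval (rep w) G = 0 := by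
    intro G hG
    have e := hc _ (isHomogeneous_linearForm_mul φ' hG)
    have e' := hc' _ (isHomogeneous_linearForm_mul φ hG)
    rw [hrestrict B B' φ' hφ'] at e
    rw [hrestrict B' B φ hφ, union_comm, mul_left_comm, e] at e'
    simp only [sub_mul, sum_sub_distrib, ← e', sub_self]
  exact sub_eq_zero.mp ((h.mono (coe_subset.mpr sdiff_subset)).eq_zero_of_forall_sum_eval_eq_zero
    hΔcard hsum hw)

theorem LinGenPos.exists_coeff_eq_mul (h : LinGenPos k n ↑Γ) (hcard : #Γ = (ℓ + 2) * n)
    {φ : Finset ℙ → Module.Dual k 𝕍} {c : Finset ℙ → ℙ → k}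
    (hφ : ∀ B ∈ Γ.powersetCard n, ∀ P ∈ Γ, φ B (rep P) = 0 ↔ P ∈ B)
    (hc : ∀ B ∈ Γ.powersetCard n, ∀ G : MvPolynomial (Fin (n + 1)) k, G.IsHomogeneous (ℓ + 1) →
      f (linearForm (φ B) * G) = ∑ w ∈ Γ \ B, c B w * eval (rep w) G) :
    ∃ d : ℙ → k, ∀ B ∈ Γ.powersetCard n, ∀ w ∈ Γ \ B, c B w = d w * φ B (rep w) := by
  have hmem : ∀ w B, B ∈ (Γ.erase w).powersetCard n ↔ B ∈ Γ.powersetCard n ∧ w ∉ B := by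
    intro w B
    simp only [mem_powersetCard, subset_erase]
    tauto
  have hne : ∀ w ∈ Γ, ∀ B ∈ (Γ.erase w).powersetCard n, φ B (rep w) ≠ 0 := fun w hw B hB =>
    mt (hφ B ((hmem w B).mp hB).1 w hw).mp ((hmem w B).mp hB).2
  have hratio : ∀ w ∈ Γ, ∃ a : k, ∀ B ∈ (Γ.erase w).powersetCard n, c B w / φ B (rep w) = a := by
    intro w hw
    have hcard' : #(Γ.erase w) + 1 = (ℓ + 2) * n := by rw [card_erase_add_one hw, hcard]
    obtain ⟨B₀, hB₀⟩ := powersetCard_nonempty.mpr (show n ≤ #(Γ.erase w) by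
      rw [add_mul] at hcard'; omega)
    refine ⟨c B₀ w / φ B₀ (rep w), fun B hB => ?_⟩
    refine Finset.eq_on_powersetCard_of_card_inter_le_one (by rw [hcard', add_mul]; omega)
      (fun B => c B w / φ B (rep w)) (fun B hB B' hB' hint => ?_) hB hB₀
    obtain ⟨hBΓ, hwB⟩ := (hmem w B).mp hB
    obtain ⟨hB'Γ, hwB'⟩ := (hmem w B').mp hB'
    rw [mem_powersetCard] at hBΓ hB'Γ
    rw [div_eq_div_iff (hne w hw B hB) (hne w hw B' hB')]
    exact h.coeff_mul_apply_eq_of_card_inter_le_one hcard hBΓ.1 hB'Γ.1 hBΓ.2 hB'Γ.2 hint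
      (fun P hP => (hφ B (mem_powersetCard.mpr hBΓ) P (hBΓ.1 hP)).mpr hP)
      (fun P hP => (hφ B' (mem_powersetCard.mpr hB'Γ) P (hB'Γ.1 hP)).mpr hP)
      (hc B (mem_powersetCard.mpr hBΓ)) (hc B' (mem_powersetCard.mpr hB'Γ))
      (by simp [hw, hwB, hwB'])
  choose! d hd using hratio
  refine ⟨d, fun B hB w hw => ?_⟩
  obtain ⟨hwΓ, hwB⟩ := mem_sdiff.mp hw
  have hB' := (hmem w B).mpr ⟨hB, hwB⟩
  rw [← hd w hwΓ B hB', div_mul_cancel₀ _ (hne w hwΓ B hB')]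

theorem span_image_eq_top_of_apply_eq_zero_iff (hΓ : n + 1 ≤ #Γ)
    {φ : Finset ℙ → Module.Dual k 𝕍}
    (hφ : ∀ B ∈ Γ.powersetCard n, ∀ P ∈ Γ, φ B (rep P) = 0 ↔ P ∈ B) :
    Submodule.span k (φ '' (Γ.powersetCard n : Set (Finset ℙ))) = ⊤ := by
  obtain ⟨s, hsΓ, hscard⟩ := exists_subset_card_eq hΓ
  have herase : ∀ j ∈ s, s.erase j ∈ Γ.powersetCard n := fun j hj =>
    mem_powersetCard.mpr ⟨(erase_subset j s).trans hsΓ, by rw [card_erase_of_mem hj, hscard]; rfl⟩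
  have hspan := Module.Dual.span_range_eq_top_of_apply_self_ne_zero (fun j : s => rep (j : ℙ))
    (fun j => φ (s.erase j)) (by simp [hscard])
    (fun j => mt (hφ _ (herase j j.2) j (hsΓ j.2)).mp (notMem_erase _ _))
    (fun i j hij => (hφ _ (herase i i.2) j (hsΓ j.2)).mpr
      (mem_erase.mpr ⟨fun h => hij (Subtype.ext h.symm), j.2⟩))
  refine top_unique (hspan ▸ Submodule.span_mono ?_)
  rintro _ ⟨j, rfl⟩
  exact ⟨_, herase j j.2, rfl⟩

theorem LinGenPos.exists_dual_coeff (h : LinGenPos k n ↑Γ)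
    (hf : ∀ B ∈ Γ.powersetCard n, ∀ φ : Module.Dual k 𝕍, (∀ P ∈ B, φ (rep P) = 0) →
      ∀ G ∈ gradedVanishing k n ↑(Γ \ B) ℓ, f (linearForm φ * G) = 0)
    {B : Finset ℙ} (hB : B ∈ Γ.powersetCard n) :
    ∃ (φ : Module.Dual k 𝕍) (c : ℙ → k), (∀ P ∈ Γ, φ (rep P) = 0 ↔ P ∈ B) ∧
      ∀ G : MvPolynomial (Fin (n + 1)) k, G.IsHomogeneous ℓ →
        f (linearForm φ * G) = ∑ w ∈ Γ \ B, c w * eval (rep w) G := by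
  obtain ⟨hBΓ, hBcard⟩ := mem_powersetCard.mp hB
  obtain ⟨φ, hφ⟩ := h.exists_dual_apply_eq_zero_iff hBΓ hBcard
  obtain ⟨c, hc⟩ := exists_eq_sum_eval_of_vanishing (Γ \ B) rep ℓ
    (f ∘ₗ LinearMap.mulLeft k (linearForm φ)) fun G hG hGΓB =>
      hf B hB φ (fun P hP => (hφ P (hBΓ hP)).mpr hP) G ⟨hG, hGΓB⟩
  exact ⟨φ, c, hφ, hc⟩

theorem LinGenPos.exists_eq_sum_eval (h : LinGenPos k n ↑Γ) (hn : 1 ≤ n)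
    (hcard : #Γ = (ℓ + 2) * n)
    (hf : ∀ B ∈ Γ.powersetCard n, ∀ φ : Module.Dual k 𝕍, (∀ P ∈ B, φ (rep P) = 0) →
      ∀ G ∈ gradedVanishing k n ↑(Γ \ B) (ℓ + 1), f (linearForm φ * G) = 0) :
    ∃ d : ℙ → k, ∀ F : MvPolynomial (Fin (n + 1)) k, F.IsHomogeneous (ℓ + 2) →
      f F = ∑ w ∈ Γ, d w * eval (rep w) F := by
  choose! φ c hφc using fun B (hB : B ∈ Γ.powersetCard n) => h.exists_dual_coeff hf hB
  obtain ⟨d, hd⟩ := h.exists_coeff_eq_mul hcard (fun B hB => (hφc B hB).1)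
    (fun B hB => (hφc B hB).2)
  refine ⟨d, fun F hF => sub_eq_zero.mp ?_⟩
  let g := f - ∑ w ∈ Γ, d w • (aeval (rep w)).toLinearMap
  have hg : ∀ ψ ∈ φ '' (Γ.powersetCard n : Set (Finset ℙ)), ∀ G : MvPolynomial (Fin (n + 1)) k,
      G.IsHomogeneous (ℓ + 1) → g (linearForm ψ * G) = 0 := by
    rintro _ ⟨B, hB, rfl⟩ G hG
    have hB : B ∈ Γ.powersetCard n := hB
    simp only [g, LinearMap.sub_apply, LinearMap.sum_apply, LinearMap.smul_apply,
      AlgHom.toLinearMap_apply, smul_eq_mul, (hφc B hB).2 G hG, sub_eq_zero]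
    calc ∑ w ∈ Γ \ B, c B w * eval (rep w) G
        = ∑ w ∈ Γ \ B, d w * eval (rep w) (linearForm (φ B) * G) :=
          sum_congr rfl fun w hw => by rw [hd B hB w hw, map_mul, eval_linearForm, mul_assoc]
      _ = ∑ w ∈ Γ, d w * eval (rep w) (linearForm (φ B) * G) := by
          refine sum_subset sdiff_subset fun w hw hwB => ?_
          have hwB : w ∈ B := by simpa [hw] using hwB
          rw [map_mul, eval_linearForm, ((hφc B hB).1 w hw).mpr hwB, zero_mul, mul_zero]
  have := apply_eq_zero_of_forall_linearForm_mul (span_image_eq_top_of_apply_eq_zero_iff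
    (by rw [hcard]; nlinarith) fun B hB => (hφc B hB).1) hg hF
  simpa [g] using this

end Blocks

theorem LinGenPos.span_Phi_eq_gradedVanishing (hn : 1 ≤ n) {m : ℕ} (hm : 1 ≤ m)
    {Γ : Finset ℙ} (hcard : #Γ = m * n) (h : LinGenPos k n ↑Γ) :
    Submodule.span k (Phi k n ↑Γ m) = gradedVanishing k n ↑Γ m := by
  classical
  induction m, hm using Nat.le_induction generalizing Γ with
  | base => exact span_Phi_one _
  | succ m hm ih =>
    obtain ⟨ℓ, rfl⟩ : ∃ ℓ, m = ℓ + 1 := ⟨m - 1, by omega⟩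
    refine (span_Phi_le _ _).antisymm fun F hF => ?_
    by_contra hFW
    obtain ⟨f, hfF, hf⟩ := Submodule.exists_dual_map_eq_bot_of_notMem hFW inferInstance
    rw [← LinearMap.le_ker_iff_map] at hf
    obtain ⟨d, hd⟩ := h.exists_eq_sum_eval hn hcard fun B hB φ hφ G hG => by
      obtain ⟨hBΓ, hBcard⟩ := mem_powersetCard.mp hB
      rw [← ih (by rw [card_sdiff_of_subset hBΓ, hcard, hBcard, add_mul _ 1, one_mul,
        Nat.add_sub_cancel]) (h.mono (coe_subset.mpr sdiff_subset))] at hG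
      exact hf (linearForm_mul_mem_span_Phi (fun P hPΓ hP => hφ P (by simpa [hPΓ] using hP)) hG)
    exact hfF (by rw [hd F hF.1]; exact sum_eq_zero fun w hw => by rw [hF.2 w hw, mul_zero])

end GeneralPosition

theorem phi_spans_d_eq_mn_general (k : Type*) [Field k] (n m : ℕ) (hn : 1 ≤ n)
    (hm : 2 ≤ m) (Γ : Set (Projectivization k (Fin (n + 1) → k)))
    (hcard : Γ.ncard = m * n) (hlgp : LinGenPos k n Γ) :
    Submodule.span k (Phi k n Γ m) = gradedVanishing k n Γ m := by
  lift Γ to Finset (Projectivization k (Fin (n + 1) → k)) using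
    Set.finite_of_ncard_pos (hcard ▸ Nat.mul_pos (by omega) hn)
  rw [Set.ncard_coe_finset] at hcard
  exact hlgp.span_Phi_eq_gradedVanishing hn (by omega) hcard

/-- If `Γ ⊆ ℙⁿ` is a finite set of exactly `d = mn` points in linearly general position,
`m ≥ 2`, then `Φ(Γ)_m` generates `I(Γ)_m` as a `k`-vector space. -/
theorem phi_spans_d_eq_mn (k : Type*) [Field k] [IsAlgClosed k] (n m : ℕ) (hn : 1 ≤ n)
    (hm : 2 ≤ m) (Γ : Set (Projectivization k (Fin (n + 1) → k)))
    (hfin : Γ.Finite) (hcard : Γ.ncard = m * n) (hlgp : LinGenPos k n Γ) :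
    Submodule.span k (Phi k n Γ m) = gradedVanishing k n Γ m :=
  phi_spans_d_eq_mn_general k n m hn hm Γ hcard hlgp
end
end

section
/- Let Γ₀ ⊆ Pⁿ be a finite set of d+2 points in linearly general position, let x and y be two distinct points of Γ₀, and set Γ₁ = Γ₀ − {x}, Γ₂ = Γ₀ − {y}, Γ = Γ₀ − {x,y}. If ℓ ≥ ⌈(d+1)/n⌉, then I(Γ)_ℓ = I(Γ₁)_ℓ + I(Γ₂)_ℓ as subspaces of S_ℓ. -/
/-!
Since `d + 1 ≤ ℓ n`, the `d + 1` points of `Γ₀ - {y}` split into `ℓ` groups of at most `n`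
points. By linear general position each group, together with `y`, is linearly independent, so
some linear form vanishes on the group but not at `y`; the product `G` of these `ℓ` forms lies
in `I(Γ₀ - {y})_ℓ` and `G(y) ≠ 0`. Any `F ∈ I(Γ)_ℓ` is then `(F - c G) + c G` with
`c = F(y) / G(y)`, and `F - c G` vanishes on `Γ ∪ {y} ⊇ Γ₀ - {x}`.
-/

open MvPolynomial

noncomputable section

theorem LinearIndependent.exists_dual_ne_zero_forall_ne_eq_zero {ι K V : Type*} [Field K]
    [AddCommGroup V] [Module K V] {v : ι → V} (hv : LinearIndependent K v) (i : ι) :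
    ∃ f : Module.Dual K V, f (v i) ≠ 0 ∧ ∀ j ≠ i, f (v j) = 0 := by
  obtain ⟨f, hfi, hf⟩ := Submodule.exists_dual_map_eq_bot_of_notMem
    (hv.notMem_span_image (s := {i}ᶜ) (Set.notMem_compl_iff.2 rfl)) inferInstance
  refine ⟨f, hfi, fun j hj => (Submodule.mem_bot K).1 ?_⟩
  exact hf ▸ Submodule.mem_map_of_mem (Submodule.subset_span ⟨j, hj, rfl⟩)

theorem Module.Dual.exists_isHomogeneous_one_eval_eq {σ K : Type*} [Fintype σ] [Field K]
    (f : Module.Dual K (σ → K)) :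
    ∃ h : MvPolynomial σ K, h.IsHomogeneous 1 ∧ ∀ v, MvPolynomial.eval v h = f v := by
  classical
  let g : (σ → K) →ₗ[K] Unit → K := LinearMap.pi fun _ => f
  refine ⟨(LinearMap.toMatrix' g).toMvPolynomial (), Matrix.toMvPolynomial_isHomogeneous _ _,
    fun v => ?_⟩
  rw [Matrix.toMvPolynomial_eval_eq_apply, LinearMap.toMatrix'_mulVec]
  rfl

section GradedVanishing

variable {k : Type*} [Field k] {n : ℕ}

theorem mem_gradedVanishing_iff {Γ : Set (Projectivization k (Fin (n + 1) → k))} {ℓ : ℕ}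
    {F : MvPolynomial (Fin (n + 1)) k} :
    F ∈ gradedVanishing k n Γ ℓ ↔
      F.IsHomogeneous ℓ ∧ ∀ P ∈ Γ, eval (Projectivization.rep P) F = 0 :=
  Iff.rfl

theorem gradedVanishing_anti (ℓ : ℕ) : Antitone (gradedVanishing k n · ℓ) :=
  fun _ _ hΓ _ hF =>
    mem_gradedVanishing_iff.2 ⟨(mem_gradedVanishing_iff.1 hF).1,
      fun P hP => (mem_gradedVanishing_iff.1 hF).2 P (hΓ hP)⟩

theorem mul_mem_gradedVanishing_union {Γ Γ' : Set (Projectivization k (Fin (n + 1) → k))}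
    {a b : ℕ} {F G : MvPolynomial (Fin (n + 1)) k} (hF : F ∈ gradedVanishing k n Γ a)
    (hG : G ∈ gradedVanishing k n Γ' b) : F * G ∈ gradedVanishing k n (Γ ∪ Γ') (a + b) := by
  rw [mem_gradedVanishing_iff] at hF hG ⊢
  refine ⟨hF.1.mul hG.1, ?_⟩
  rintro P (hP | hP)
  · rw [eval_mul, hF.2 P hP, zero_mul]
  · rw [eval_mul, hG.2 P hP, mul_zero]

theorem gradedVanishing_eq_sup_span_singleton {Γ : Set (Projectivization k (Fin (n + 1) → k))}
    {ℓ : ℕ} {G : MvPolynomial (Fin (n + 1)) k} {y : Projectivization k (Fin (n + 1) → k)}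
    (hG : G ∈ gradedVanishing k n Γ ℓ) (hGy : eval y.rep G ≠ 0) :
    gradedVanishing k n Γ ℓ = gradedVanishing k n (insert y Γ) ℓ ⊔ k ∙ G := by
  refine le_antisymm (fun F hF => ?_)
    (sup_le (gradedVanishing_anti ℓ (Set.subset_insert y Γ))
      ((Submodule.span_singleton_le_iff_mem _ _).2 hG))
  set c := eval y.rep F / eval y.rep G
  refine Submodule.mem_sup.2 ⟨F - c • G, ?_, c • G,
    Submodule.smul_mem _ c (Submodule.mem_span_singleton_self G), sub_add_cancel F _⟩
  rw [mem_gradedVanishing_iff] at hF hG ⊢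
  refine ⟨hF.1.sub (smul_eq_C_mul G c ▸ hG.1.C_mul c), ?_⟩
  rintro P (rfl | hP)
  · rw [map_sub, smul_eval, div_mul_cancel₀ _ hGy, sub_self]
  · rw [map_sub, smul_eval, hF.2 P hP, hG.2 P hP, mul_zero, sub_zero]

end GradedVanishing

namespace LinGenPos

variable {k : Type*} [Field k] {n : ℕ} {Γ₀ : Set (Projectivization k (Fin (n + 1) → k))}
  {y : Projectivization k (Fin (n + 1) → k)}

theorem exists_linearForm_mem_gradedVanishing (hlgp : LinGenPos k n Γ₀) (hy : y ∈ Γ₀)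
    (B : Finset (Projectivization k (Fin (n + 1) → k))) (hBΓ₀ : ↑B ⊆ Γ₀) (hyB : y ∉ B)
    (hBcard : B.card ≤ n) : ∃ h ∈ gradedVanishing k n ↑B 1, eval y.rep h ≠ 0 := by
  classical
  have hli := hlgp (insert y B) (by simpa [Set.insert_subset_iff] using ⟨hy, hBΓ₀⟩)
    ((Finset.card_insert_le y B).trans (by omega))
  obtain ⟨f, hfy, hf⟩ := hli.exists_dual_ne_zero_forall_ne_eq_zero ⟨y, Finset.mem_insert_self y B⟩
  obtain ⟨h, hhom, heval⟩ := f.exists_isHomogeneous_one_eval_eq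
  refine ⟨h, mem_gradedVanishing_iff.2 ⟨hhom, fun P hP => ?_⟩, heval _ ▸ hfy⟩
  have hPy : P ≠ y := fun hPy => hyB (hPy ▸ hP)
  exact heval _ ▸ hf ⟨P, Finset.mem_insert_of_mem hP⟩ (Subtype.coe_ne_coe.1 hPy)

theorem exists_mem_gradedVanishing_eval_ne_zero (hlgp : LinGenPos k n Γ₀) (hy : y ∈ Γ₀)
    (ℓ : ℕ) (A : Finset (Projectivization k (Fin (n + 1) → k))) (hAΓ₀ : ↑A ⊆ Γ₀) (hyA : y ∉ A)
    (hAcard : A.card ≤ ℓ * n) : ∃ G ∈ gradedVanishing k n ↑A ℓ, eval y.rep G ≠ 0 := by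
  classical
  induction ℓ generalizing A with
  | zero =>
    rw [zero_mul, Nat.le_zero, Finset.card_eq_zero] at hAcard
    exact ⟨1, mem_gradedVanishing_iff.2 ⟨isHomogeneous_one _ _, by simp [hAcard]⟩, by simp⟩
  | succ ℓ ih =>
    obtain ⟨B, hBA, hBcard⟩ := Finset.exists_subset_card_eq (min_le_left A.card n)
    obtain ⟨h, hh, hhy⟩ := hlgp.exists_linearForm_mem_gradedVanishing hy B
      (fun P hP => hAΓ₀ (hBA hP)) (fun hyB => hyA (hBA hyB)) (hBcard ▸ min_le_right _ _)
    obtain ⟨G, hG, hGy⟩ := ih (A \ B) (fun P hP => hAΓ₀ (Finset.mem_sdiff.1 hP).1)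
      (fun hyAB => hyA (Finset.mem_sdiff.1 hyAB).1)
      (by rw [Finset.card_sdiff_of_subset hBA, hBcard]; rw [add_mul] at hAcard; omega)
    refine ⟨G * h, ?_, by rw [eval_mul]; exact mul_ne_zero hGy hhy⟩
    rw [← Finset.sdiff_union_of_subset hBA, Finset.coe_union]
    exact mul_mem_gradedVanishing_union hG hh

end LinGenPos

theorem graded_piece_sum_general (k : Type*) [Field k] (n d ℓ : ℕ) (hn : 1 ≤ n)
    (Γ₀ : Set (Projectivization k (Fin (n + 1) → k)))
    (hfin : Γ₀.Finite) (hcard : Γ₀.ncard = d + 2) (hlgp : LinGenPos k n Γ₀)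
    (x y : Projectivization k (Fin (n + 1) → k)) (hy : y ∈ Γ₀)
    (hge : ⌈((d : ℚ) + 1) / (n : ℚ)⌉ ≤ (ℓ : ℤ)) :
    gradedVanishing k n (Γ₀ \ {x, y}) ℓ =
      gradedVanishing k n (Γ₀ \ {x}) ℓ ⊔ gradedVanishing k n (Γ₀ \ {y}) ℓ := by
  have hdℓ : d + 1 ≤ ℓ * n := by
    have := Int.ceil_le.1 hge
    rw [div_le_iff₀ (by exact_mod_cast hn)] at this
    exact_mod_cast this
  obtain ⟨A, hA⟩ := (hfin.sdiff (t := {y})).exists_finset_coe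
  have hAcard : A.card = d + 1 := by
    rw [← Set.ncard_coe_finset, hA, Set.ncard_sdiff_singleton_of_mem hy, hcard]; rfl
  obtain ⟨G, hG, hGy⟩ := hlgp.exists_mem_gradedVanishing_eval_ne_zero hy ℓ A
    (hA ▸ Set.sdiff_subset) (by simp [← Finset.mem_coe, hA]) (hAcard ▸ hdℓ)
  rw [hA] at hG
  have hsub : Γ₀ \ {x, y} ⊆ Γ₀ \ {y} := Set.sdiff_subset_sdiff_right (by simp)
  have hsplit : Γ₀ \ {x, y} = (Γ₀ \ {x}) \ {y} := by rw [Set.sdiff_sdiff, Set.insert_eq x {y}]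
  refine le_antisymm ?_
    (sup_le (gradedVanishing_anti ℓ (Set.sdiff_subset_sdiff_right (by simp)))
      (gradedVanishing_anti ℓ hsub))
  calc gradedVanishing k n (Γ₀ \ {x, y}) ℓ
      = gradedVanishing k n (insert y (Γ₀ \ {x, y})) ℓ ⊔ k ∙ G :=
        gradedVanishing_eq_sup_span_singleton (gradedVanishing_anti ℓ hsub hG) hGy
    _ ≤ _ := sup_le_sup (gradedVanishing_anti ℓ
        (by rw [hsplit]; exact Set.subset_insert_sdiff_singleton y _))
        ((Submodule.span_singleton_le_iff_mem _ _).2 hG)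

/-- Lemma: for `Γ₀` a set of `d+2` points in linearly general position, distinct points
`x, y ∈ Γ₀`, and `ℓ ≥ ⌈(d+1)/n⌉`, one has `I(Γ₀-{x,y})_ℓ = I(Γ₀-{x})_ℓ + I(Γ₀-{y})_ℓ`. -/
theorem graded_piece_sum (k : Type*) [Field k] [IsAlgClosed k] (n d ℓ : ℕ) (hn : 1 ≤ n)
    (Γ₀ : Set (Projectivization k (Fin (n + 1) → k)))
    (hfin : Γ₀.Finite) (hcard : Γ₀.ncard = d + 2) (hlgp : LinGenPos k n Γ₀)
    (x y : Projectivization k (Fin (n + 1) → k)) (hx : x ∈ Γ₀) (hy : y ∈ Γ₀)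
    (hxy : x ≠ y) (hge : ⌈((d : ℚ) + 1) / (n : ℚ)⌉ ≤ (ℓ : ℤ)) :
    gradedVanishing k n (Γ₀ \ {x, y}) ℓ =
      gradedVanishing k n (Γ₀ \ {x}) ℓ ⊔ gradedVanishing k n (Γ₀ \ {y}) ℓ :=
  graded_piece_sum_general k n d ℓ hn Γ₀ hfin hcard hlgp x y hy hge
end
end

section
/- Let Γ ⊆ Pⁿ be a finite set of exactly mn points in linearly general position for some integer m ≥ 3, and let F = h₁⋯h_{m+1} ∈ Φ(Γ)_{m+1} be a product of m+1 nonzero linear forms vanishing on Γ such that μ_Γ(F) = mn−1, i.e. for some i the product of the m factors other than h_i vanishes at exactly mn−1 points of Γ. Then F lies in the k-linear span of S₁Φ(Γ)_m = { hG : h ∈ S₁ \ {0}, G ∈ Φ(Γ)_m }. -/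
open MvPolynomial

noncomputable section

/-!
Write `F = h₀ G` where `G`, the product of the other factors, vanishes on `Γ` except at one
point `P`; then `h₀(P) = 0`. Every other point of `Γ` is a zero of some factor of `G`, and since
there are only `mn - 1` of them, for some factor `h₁` the set `E` of points at which `h₁` is the
only vanishing factor of `G` has fewer than `n` elements. Let `G₂ = G / h₁`; it vanishes on
`Γ \ ({P} ∪ E)`. Pick a factor `h₂` of `G₂` with a zero `R₀ ≠ P` in `Γ`; by general position its
zero set `Z` in `Γ \ {P}` has at most `n` points, so `{P} ∪ Z` is independent and `h₀` is a
combination of linear forms `u` vanishing at `P` and on `Z` except at one point `R`. For such `u`,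
take `ℓ` vanishing at `P` and on `E` with `ℓ(R) = 1` (again general position, as
`|{R, P} ∪ E| ≤ n + 1`) and put `c = h₁ - h₁(R) ℓ`. Then
`u h₁ G₂ = h₁(R) · u (ℓ G₂) + h₂ · (u c G₂ / h₂)`, and both `ℓ G₂` and `u c G₂ / h₂` are products
of `m` linear forms vanishing on `Γ`.
-/

open scoped LinearAlgebra.Projectivization

namespace MvPolynomial

variable {σ k : Type*} [Fintype σ] [Field k]

lemma IsHomogeneous.exists_eq_toMvPolynomial {p : MvPolynomial σ k} (hp : p.IsHomogeneous 1) :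
    ∃ M : Matrix Unit σ k, p = M.toMvPolynomial () := by
  classical
  refine ⟨Matrix.of fun _ i => coeff (Finsupp.single i 1) p, ?_⟩
  ext d
  simp only [Matrix.toMvPolynomial, coeff_sum, coeff_monomial, Matrix.of_apply]
  by_cases hd : d.degree = 1
  · obtain ⟨i, rfl⟩ := (Finsupp.sum_eq_one_iff d).1 hd
    simp [Finsupp.single_left_inj]
  · rw [hp.coeff_eq_zero hd, Finset.sum_eq_zero]
    rintro i -
    rw [if_neg]
    rintro rfl
    simp at hd

lemma IsHomogeneous.eq_zero_of_eval_eq_zero {ι : Type*} [Fintype ι] {v : ι → σ → k}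
    (hv : LinearIndependent k v) (hcard : Fintype.card ι = Fintype.card σ)
    {p : MvPolynomial σ k} (hp : p.IsHomogeneous 1) (h0 : ∀ i, eval (v i) p = 0) : p = 0 := by
  classical
  obtain ⟨M, rfl⟩ := hp.exists_eq_toMvPolynomial
  let b := basisOfLinearIndependentOfCardEqFinrank' v hv (by simpa using hcard)
  have hM : Matrix.toLin' M = 0 := b.ext fun i => by
    ext
    simpa [b, Matrix.toMvPolynomial_eval_eq_apply] using h0 i
  rw [Matrix.toLin'.map_eq_zero_iff.1 hM, Matrix.toMvPolynomial_zero, Pi.zero_apply]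

lemma _root_.LinearIndependent.exists_isHomogeneous_dual {ι : Type*} [Fintype ι]
    [DecidableEq ι] {v : ι → σ → k} (hv : LinearIndependent k v) :
    ∃ ℓ : ι → MvPolynomial σ k, (∀ i, (ℓ i).IsHomogeneous 1) ∧
      ∀ i j, eval (v j) (ℓ i) = if i = j then 1 else 0 := by
  classical
  -- the dual forms are the rows of a left inverse of `c ↦ ∑ i, c i • v i`
  obtain ⟨g, hg⟩ := (Fintype.linearCombination k v).exists_leftInverse_of_injective
    (LinearMap.ker_eq_bot.2 (linearIndependent_iff_injective_fintypeLinearCombination.1 hv))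
  refine ⟨(LinearMap.toMatrix' g).toMvPolynomial, Matrix.toMvPolynomial_isHomogeneous _,
    fun i j => ?_⟩
  rw [Matrix.toMvPolynomial_eval_eq_apply, LinearMap.toMatrix'_mulVec, ← one_smul k (v j),
    ← Fintype.linearCombination_apply_single, ← LinearMap.comp_apply, hg, LinearMap.id_apply,
    Pi.single_apply]

end MvPolynomial

namespace Finset

lemma exists_card_exclusive_lt {α ι : Type*} [DecidableEq ι] {T : Finset α} {I : Finset ι}
    {Z : ι → α → Prop} (hcover : ∀ x ∈ T, ∃ j ∈ I, Z j x) {n : ℕ} (hT : T.card < I.card * n) :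
    ∃ i ∈ I, ∃ E ⊆ T, E.card < n ∧ (∀ x ∈ E, Z i x ∧ ∀ j ∈ I.erase i, ¬ Z j x) ∧
      ∀ x ∈ T, x ∉ E → ∃ j ∈ I.erase i, Z j x := by
  classical
  set E : ι → Finset α := fun i => T.filter fun x => ∀ j ∈ I.erase i, ¬ Z j x
  have hdisj : (I : Set ι).PairwiseDisjoint E := by
    intro i _ i' hi' hii'
    refine disjoint_left.2 fun x hxi hxi' => ?_
    obtain ⟨j, hj, hjx⟩ := hcover x (mem_filter.1 hxi).1
    rcases eq_or_ne j i with rfl | hji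
    · exact (mem_filter.1 hxi').2 j (mem_erase.2 ⟨hii', hj⟩) hjx
    · exact (mem_filter.1 hxi).2 j (mem_erase.2 ⟨hji, hj⟩) hjx
  have hsum : ∑ i ∈ I, (E i).card < ∑ _i ∈ I, n := by
    rw [← card_biUnion hdisj, sum_const, smul_eq_mul]
    exact (card_le_card (biUnion_subset.2 fun i _ => filter_subset _ _)).trans_lt hT
  obtain ⟨i, hi, hEi⟩ := exists_lt_of_sum_lt hsum
  refine ⟨i, hi, E i, filter_subset _ _, hEi, fun x hx => ⟨?_, (mem_filter.1 hx).2⟩,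
    fun x hxT hxE => ?_⟩
  · obtain ⟨j, hj, hjx⟩ := hcover x (mem_filter.1 hx).1
    by_contra hix
    exact (mem_filter.1 hx).2 j (mem_erase.2 ⟨fun hji => hix (hji ▸ hjx), hj⟩) hjx
  · by_contra! hx
    exact hxE (mem_filter.2 ⟨hxT, hx⟩)

end Finset

section

variable {k : Type*} [Field k] {n : ℕ} {Γ : Set (ℙ k (Fin (n + 1) → k))}

lemma exists_of_lambdaGamma_eq_ncard_sub_one {G : MvPolynomial (Fin (n + 1)) k}
    (hΓ : Γ.Finite) (hne : Γ.Nonempty) (hG : lambdaGamma k n Γ G = Γ.ncard - 1) :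
    ∃ P ∈ Γ, eval P.rep G ≠ 0 ∧ ∀ x ∈ Γ, x ≠ P → eval x.rep G = 0 := by
  have hpos := hne.ncard_pos hΓ
  have hone : (Γ \ {x ∈ Γ | eval x.rep G = 0}).ncard = 1 := by
    rw [Set.ncard_sdiff' (Set.sep_subset _ _) hΓ]
    unfold lambdaGamma at hG
    omega
  obtain ⟨P, hP⟩ := Set.ncard_eq_one.1 hone
  have hmem : ∀ x, x ∈ Γ ∧ ¬ (x ∈ Γ ∧ eval x.rep G = 0) ↔ x = P := fun x =>
    Set.ext_iff.1 hP x
  obtain ⟨hPΓ, hPG⟩ := (hmem P).2 rfl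
  exact ⟨P, hPΓ, fun h0 => hPG ⟨hPΓ, h0⟩, fun x hx hxP => by
    by_contra h0
    exact hxP ((hmem x).1 ⟨hx, fun h => h0 h.2⟩)⟩

lemma exists_of_sup_lambdaGamma_eq {ι : Type*} [Fintype ι] [Nonempty ι] [DecidableEq ι]
    {h : ι → MvPolynomial (Fin (n + 1)) k} (hΓ : Γ.Finite) (hne : Γ.Nonempty)
    (hF : ∀ x ∈ Γ, eval x.rep (∏ i, h i) = 0)
    (hmu : (Finset.univ.sup fun i =>
      lambdaGamma k n Γ (∏ j ∈ Finset.univ.erase i, h j)) = Γ.ncard - 1) :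
    ∃ i₀, ∃ P ∈ Γ, eval P.rep (h i₀) = 0 ∧
      ∀ x ∈ Γ, x ≠ P → ∃ j ∈ Finset.univ.erase i₀, eval x.rep (h j) = 0 := by
  obtain ⟨i₀, -, hi₀⟩ := Finset.exists_mem_eq_sup Finset.univ Finset.univ_nonempty
    fun i => lambdaGamma k n Γ (∏ j ∈ Finset.univ.erase i, h j)
  obtain ⟨P, hPΓ, hP, hvan⟩ := exists_of_lambdaGamma_eq_ncard_sub_one hΓ hne (hi₀ ▸ hmu)
  refine ⟨i₀, P, hPΓ, ?_, fun x hx hxP => ?_⟩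
  · have := hF P hPΓ
    rw [← Finset.mul_prod_erase Finset.univ h (Finset.mem_univ i₀), map_mul] at this
    exact (mul_eq_zero.1 this).resolve_right hP
  · have := hvan x hx hxP
    rwa [map_prod, Finset.prod_eq_zero_iff] at this

lemma LinGenPos.card_le_of_eval_eq_zero (hΓ : LinGenPos k n Γ)
    {s : Finset (ℙ k (Fin (n + 1) → k))} (hs : ↑s ⊆ Γ) {p : MvPolynomial (Fin (n + 1)) k}
    (hp0 : p ≠ 0) (hp : p.IsHomogeneous 1) (h0 : ∀ x ∈ s, eval x.rep p = 0) : s.card ≤ n := by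
  by_contra! hlt
  obtain ⟨t, hts, ht⟩ := Finset.exists_subset_card_eq (show n + 1 ≤ s.card by omega)
  exact hp0 (hp.eq_zero_of_eval_eq_zero (hΓ t ((Finset.coe_subset.2 hts).trans hs) ht.le)
    (by simp [ht]) fun x => h0 x (hts x.2))

lemma LinGenPos.exists_isHomogeneous_dual (hΓ : LinGenPos k n Γ)
    {s : Finset (ℙ k (Fin (n + 1) → k))} (hs : ↑s ⊆ Γ) (hcard : s.card ≤ n + 1)
    {R : ℙ k (Fin (n + 1) → k)} (hR : R ∈ s) :
    ∃ ℓ : MvPolynomial (Fin (n + 1)) k, ℓ.IsHomogeneous 1 ∧ eval R.rep ℓ = 1 ∧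
      ∀ x ∈ s, x ≠ R → eval x.rep ℓ = 0 := by
  classical
  obtain ⟨ℓ, hℓ, hdual⟩ := (hΓ s hs hcard).exists_isHomogeneous_dual
  refine ⟨ℓ ⟨R, hR⟩, hℓ _, by simpa using hdual ⟨R, hR⟩ ⟨R, hR⟩, fun x hx hxR => ?_⟩
  simpa [Subtype.ext_iff, Ne.symm hxR] using hdual ⟨R, hR⟩ ⟨x, hx⟩

lemma LinGenPos.mul_mem_of_forall_vanishing_off_one (hΓ : LinGenPos k n Γ)
    {M : Submodule k (MvPolynomial (Fin (n + 1)) k)} {B : MvPolynomial (Fin (n + 1)) k}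
    {P : ℙ k (Fin (n + 1) → k)} (hP : P ∈ Γ) {s : Finset (ℙ k (Fin (n + 1) → k))}
    (hs : ↑s ⊆ Γ) (hcard : s.card ≤ n) (hPs : P ∉ s) (hsne : s.Nonempty)
    (hM : ∀ u : MvPolynomial (Fin (n + 1)) k, u.IsHomogeneous 1 → eval P.rep u = 0 →
      ∀ R ∈ s, (∀ x ∈ s, x ≠ R → eval x.rep u = 0) → u * B ∈ M)
    {a : MvPolynomial (Fin (n + 1)) k} (ha : a.IsHomogeneous 1) (haP : eval P.rep a = 0) :
    a * B ∈ M := by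
  classical
  have hdual := fun R (hR : R ∈ s) => hΓ.exists_isHomogeneous_dual (s := insert P s)
    (by simp [Set.insert_subset_iff, hP, hs]) ((Finset.card_insert_le _ _).trans (by omega))
    (Finset.mem_insert_of_mem hR)
  choose! ℓ hℓ hℓR hℓ0 using hdual
  have hℓP : ∀ R ∈ s, eval P.rep (ℓ R) = 0 := fun R hR =>
    hℓ0 R hR P (Finset.mem_insert_self _ _) fun h => hPs (h ▸ hR)
  -- the remainder of `a` after interpolation on `s` vanishes on all of `insert P s`
  set r := a - ∑ R ∈ s, C (eval R.rep a) * ℓ R with hr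
  have hrP : eval P.rep r = 0 := by
    simp only [hr, map_sub, map_sum, map_mul, eval_C, haP, zero_sub, neg_eq_zero]
    exact Finset.sum_eq_zero fun R hR => by rw [hℓP R hR, mul_zero]
  have hrs : ∀ x ∈ s, eval x.rep r = 0 := fun x hx => by
    simp only [hr, map_sub, map_sum, map_mul, eval_C]
    rw [Finset.sum_eq_single x (fun R hR hRx => by
      rw [hℓ0 R hR x (Finset.mem_insert_of_mem hx) hRx.symm, mul_zero]) (absurd hx),
      hℓR x hx, mul_one, sub_self]
  obtain ⟨R₀, hR₀⟩ := hsne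
  rw [show a = ∑ R ∈ s, C (eval R.rep a) * ℓ R + r by rw [hr, add_sub_cancel], add_mul,
    Finset.sum_mul]
  refine add_mem (Submodule.sum_mem _ fun R hR => ?_) ?_
  · rw [mul_assoc, ← smul_eq_C_mul]
    exact M.smul_mem _ (hM _ (hℓ R hR) (hℓP R hR) R hR fun x hx hxR =>
      hℓ0 R hR x (Finset.mem_insert_of_mem hx) hxR)
  · exact hM r (ha.sub (IsHomogeneous.sum _ _ _ fun R hR => (hℓ R hR).C_mul _)) hrP R₀ hR₀
      fun x hx _ => hrs x hx

lemma list_prod_mem_Phi {L : List (MvPolynomial (Fin (n + 1)) k)}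
    (hL : ∀ p ∈ L, p ≠ 0 ∧ p.IsHomogeneous 1) (hzero : ∀ x ∈ Γ, ∃ p ∈ L, eval x.rep p = 0) :
    L.prod ∈ Phi k n Γ L.length := by
  have hprod : L.prod = ∏ i, L.get i := by rw [← List.prod_ofFn, List.ofFn_get]
  have hget : ∀ i, L.get i ≠ 0 ∧ (L.get i).IsHomogeneous 1 := fun i => hL _ (L.get_mem i)
  refine ⟨⟨?_, fun x hx => ?_⟩, L.get, hget, hprod⟩
  · rw [SetLike.mem_coe, mem_homogeneousSubmodule, hprod]
    simpa using IsHomogeneous.prod Finset.univ L.get (fun _ => 1) fun i _ => (hget i).2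
  · obtain ⟨p, hp, hpx⟩ := hzero x hx
    rw [map_list_prod]
    exact List.prod_eq_zero (List.mem_map.2 ⟨p, hp, hpx⟩)

lemma mul_mem_span_S1Phi {u G : MvPolynomial (Fin (n + 1)) k} {m : ℕ}
    (hu : u.IsHomogeneous 1) (hG : G ∈ Phi k n Γ m) :
    u * G ∈ Submodule.span k (S1Phi k n Γ m) := by
  rcases eq_or_ne u 0 with rfl | hu0
  · rw [zero_mul]
    exact Submodule.zero_mem _
  · exact Submodule.subset_span ⟨u, G, hu0, hu, hG, rfl⟩

variable {P : ℙ k (Fin (n + 1) → k)} {E : Finset (ℙ k (Fin (n + 1) → k))} {ι : Type*}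
  {g : ι → MvPolynomial (Fin (n + 1)) k} {J : Finset ι}

lemma mul_prod_mem_Phi (hg : ∀ j ∈ J, g j ≠ 0 ∧ (g j).IsHomogeneous 1)
    (hcover : ∀ x ∈ Γ, x ≠ P → x ∉ E → ∃ j ∈ J, eval x.rep (g j) = 0)
    {ℓ : MvPolynomial (Fin (n + 1)) k} (hℓ0 : ℓ ≠ 0) (hℓ : ℓ.IsHomogeneous 1)
    (hℓP : eval P.rep ℓ = 0) (hℓE : ∀ x ∈ E, eval x.rep ℓ = 0) :
    ℓ * ∏ j ∈ J, g j ∈ Phi k n Γ (J.card + 1) := by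
  have hL := list_prod_mem_Phi (Γ := Γ) (L := ℓ :: J.toList.map g) ?_ ?_
  · simpa [Finset.prod_map_toList, add_comm] using hL
  · simp only [List.mem_cons, List.mem_map, Finset.mem_toList]
    rintro p (rfl | ⟨j, hj, rfl⟩)
    exacts [⟨hℓ0, hℓ⟩, hg j hj]
  · intro x hx
    by_cases hxP : x = P
    · exact ⟨ℓ, List.mem_cons_self, hxP ▸ hℓP⟩
    by_cases hxE : x ∈ E
    · exact ⟨ℓ, List.mem_cons_self, hℓE x hxE⟩
    obtain ⟨j, hj, hjx⟩ := hcover x hx hxP hxE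
    exact ⟨g j, List.mem_cons_of_mem _ (List.mem_map_of_mem (Finset.mem_toList.2 hj)), hjx⟩

lemma mul_mul_prod_erase_mem_Phi [DecidableEq ι]
    (hg : ∀ j ∈ J, g j ≠ 0 ∧ (g j).IsHomogeneous 1)
    (hcover : ∀ x ∈ Γ, x ≠ P → x ∉ E → ∃ j ∈ J, eval x.rep (g j) = 0)
    {j₂ : ι} (hj₂ : j₂ ∈ J) {R : ℙ k (Fin (n + 1) → k)} {u c : MvPolynomial (Fin (n + 1)) k}
    (hu0 : u ≠ 0) (hu : u.IsHomogeneous 1) (huP : eval P.rep u = 0)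
    (huZ : ∀ x ∈ Γ, x ≠ P → x ≠ R → eval x.rep (g j₂) = 0 → eval x.rep u = 0)
    (hc0 : c ≠ 0) (hc : c.IsHomogeneous 1) (hcE : ∀ x ∈ E, eval x.rep c = 0)
    (hcR : eval R.rep c = 0) :
    u * c * ∏ j ∈ J.erase j₂, g j ∈ Phi k n Γ (J.card + 1) := by
  have hL := list_prod_mem_Phi (Γ := Γ) (L := u :: c :: (J.erase j₂).toList.map g) ?_ ?_
  · simpa [Finset.prod_map_toList, mul_assoc, ← Finset.card_erase_add_one hj₂] using hL
  · simp only [List.mem_cons, List.mem_map, Finset.mem_toList]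
    rintro p (rfl | rfl | ⟨j, hj, rfl⟩)
    exacts [⟨hu0, hu⟩, ⟨hc0, hc⟩, hg j (Finset.mem_of_mem_erase hj)]
  · intro x hx
    by_cases hxP : x = P
    · exact ⟨u, List.mem_cons_self, hxP ▸ huP⟩
    by_cases hxE : x ∈ E
    · exact ⟨c, List.mem_cons_of_mem _ List.mem_cons_self, hcE x hxE⟩
    by_cases hxR : x = R
    · exact ⟨c, List.mem_cons_of_mem _ List.mem_cons_self, hxR ▸ hcR⟩
    obtain ⟨j, hj, hjx⟩ := hcover x hx hxP hxE
    rcases eq_or_ne j j₂ with rfl | hjj₂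
    · exact ⟨u, List.mem_cons_self, huZ x hx hxP hxR hjx⟩
    · refine ⟨g j, ?_, hjx⟩
      simpa using Or.inr (Or.inr ⟨j, ⟨hjj₂, hj⟩, rfl⟩)

lemma mul_mul_prod_mem_span_S1Phi_of_vanishing_off (hΓ : LinGenPos k n Γ) (hP : P ∈ Γ)
    (hEΓ : ↑E ⊆ Γ) (hE : E.card < n) (hg : ∀ j ∈ J, g j ≠ 0 ∧ (g j).IsHomogeneous 1)
    (hcover : ∀ x ∈ Γ, x ≠ P → x ∉ E → ∃ j ∈ J, eval x.rep (g j) = 0)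
    {j₂ : ι} (hj₂ : j₂ ∈ J) {b : MvPolynomial (Fin (n + 1)) k} (hb : b.IsHomogeneous 1)
    (hbE : ∀ x ∈ E, eval x.rep b = 0) {R : ℙ k (Fin (n + 1) → k)} (hR : R ∈ Γ) (hRP : R ≠ P)
    (hRE : R ∉ E) {u : MvPolynomial (Fin (n + 1)) k} (hu : u.IsHomogeneous 1)
    (huP : eval P.rep u = 0)
    (huZ : ∀ x ∈ Γ, x ≠ P → x ≠ R → eval x.rep (g j₂) = 0 → eval x.rep u = 0) :
    u * (b * ∏ j ∈ J, g j) ∈ Submodule.span k (S1Phi k n Γ (J.card + 1)) := by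
  classical
  rcases eq_or_ne u 0 with rfl | hu0
  · rw [zero_mul]
    exact Submodule.zero_mem _
  have hcard : (insert R (insert P E)).card ≤ n + 1 :=
    (Finset.card_insert_le _ _).trans (by linarith [Finset.card_insert_le P E])
  obtain ⟨ℓ, hℓ, hℓR, hℓ0⟩ := hΓ.exists_isHomogeneous_dual (s := insert R (insert P E))
    (by simp [Set.insert_subset_iff, hR, hP, hEΓ]) hcard (Finset.mem_insert_self _ _)
  have hℓP : eval P.rep ℓ = 0 := hℓ0 P (by simp) hRP.symm
  have hℓE : ∀ x ∈ E, eval x.rep ℓ = 0 := fun x hx =>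
    hℓ0 x (by simp [hx]) fun hxR => hRE (hxR ▸ hx)
  set c := b - C (eval R.rep b) * ℓ with hc
  have hcE : ∀ x ∈ E, eval x.rep c = 0 := fun x hx => by simp [hc, hbE x hx, hℓE x hx]
  have hcR : eval R.rep c = 0 := by simp [hc, hℓR]
  have hsplit : u * (b * ∏ j ∈ J, g j) =
      eval R.rep b • (u * (ℓ * ∏ j ∈ J, g j)) + g j₂ * (u * c * ∏ j ∈ J.erase j₂, g j) := by
    rw [← Finset.mul_prod_erase J g hj₂, smul_eq_C_mul, hc]
    ring
  rw [hsplit]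
  refine add_mem (Submodule.smul_mem _ _ (mul_mem_span_S1Phi hu
    (mul_prod_mem_Phi hg hcover (fun h0 => by simp [h0] at hℓR) hℓ hℓP hℓE))) ?_
  rcases eq_or_ne c 0 with hc0 | hc0
  · rw [hc0, mul_zero, zero_mul, mul_zero]
    exact Submodule.zero_mem _
  · exact mul_mem_span_S1Phi (hg j₂ hj₂).2 (mul_mul_prod_erase_mem_Phi hg hcover hj₂ hu0 hu
      huP huZ hc0 (hb.sub (hℓ.C_mul _)) hcE hcR)

lemma mul_mul_prod_mem_span_S1Phi (hΓ : LinGenPos k n Γ) (hfin : Γ.Finite) (hP : P ∈ Γ)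
    (hEΓ : ↑E ⊆ Γ) (hE : E.card < n) (hg : ∀ j ∈ J, g j ≠ 0 ∧ (g j).IsHomogeneous 1)
    (hcover : ∀ x ∈ Γ, x ≠ P → x ∉ E → ∃ j ∈ J, eval x.rep (g j) = 0)
    (hEg : ∀ x ∈ E, ∀ j ∈ J, eval x.rep (g j) ≠ 0) {j₂ : ι} (hj₂ : j₂ ∈ J)
    {R₀ : ℙ k (Fin (n + 1) → k)} (hR₀ : R₀ ∈ Γ) (hR₀P : R₀ ≠ P)
    (hR₀g : eval R₀.rep (g j₂) = 0) {a b : MvPolynomial (Fin (n + 1)) k}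
    (ha : a.IsHomogeneous 1) (haP : eval P.rep a = 0) (hb : b.IsHomogeneous 1)
    (hbE : ∀ x ∈ E, eval x.rep b = 0) :
    a * (b * ∏ j ∈ J, g j) ∈ Submodule.span k (S1Phi k n Γ (J.card + 1)) := by
  classical
  set Z := hfin.toFinset.filter fun x => x ≠ P ∧ eval x.rep (g j₂) = 0
  have hZ : ∀ x, x ∈ Z ↔ x ∈ Γ ∧ x ≠ P ∧ eval x.rep (g j₂) = 0 := by simp [Z]
  have hZΓ : ↑Z ⊆ Γ := fun x hx => ((hZ x).1 hx).1
  have hZcard : Z.card ≤ n := hΓ.card_le_of_eval_eq_zero hZΓ (hg j₂ hj₂).1 (hg j₂ hj₂).2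
    fun x hx => ((hZ x).1 hx).2.2
  refine hΓ.mul_mem_of_forall_vanishing_off_one hP hZΓ hZcard
    (fun hPZ => ((hZ P).1 hPZ).2.1 rfl) ⟨R₀, (hZ R₀).2 ⟨hR₀, hR₀P, hR₀g⟩⟩ ?_ ha haP
  intro u hu huP R hR huZ
  obtain ⟨hRΓ, hRP, hRg⟩ := (hZ R).1 hR
  exact mul_mul_prod_mem_span_S1Phi_of_vanishing_off hΓ hP hEΓ hE hg hcover hj₂ hb hbE hRΓ hRP
    (fun hRE => hEg R hRE j₂ hj₂ hRg) hu huP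
    fun x hx hxP hxR hxg => huZ x ((hZ x).2 ⟨hx, hxP, hxg⟩) hxR

end

theorem mu_eq_d_sub_one_case_general (k : Type*) [Field k] (n m : ℕ) (hn : 1 ≤ n)
    (hm : 3 ≤ m) (Γ : Set (Projectivization k (Fin (n + 1) → k)))
    (hcard : Γ.ncard = m * n) (hlgp : LinGenPos k n Γ)
    (h : Fin (m + 1) → MvPolynomial (Fin (n + 1)) k)
    (hh : ∀ i, h i ≠ 0 ∧ (h i).IsHomogeneous 1)
    (hF : (∏ i, h i) ∈ gradedVanishing k n Γ (m + 1))
    (hmu : (Finset.univ.sup fun i =>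
        lambdaGamma k n Γ (∏ j ∈ Finset.univ.erase i, h j)) = m * n - 1) :
    (∏ i, h i) ∈ Submodule.span k (S1Phi k n Γ m) := by
  classical
  have hmn : 2 * n ≤ m * n := Nat.mul_le_mul_right n (by omega)
  have hΓ : Γ.Finite := Set.finite_of_ncard_pos (by omega)
  obtain ⟨i₀, P, hPΓ, haP, hvan⟩ := exists_of_sup_lambdaGamma_eq hΓ
    (Set.nonempty_of_ncard_ne_zero (by omega)) (Submodule.mem_inf.1 hF).2 (hcard ▸ hmu)
  set T := hΓ.toFinset.erase P
  have hT : ∀ x, x ∈ T ↔ x ∈ Γ ∧ x ≠ P := by simp [T, and_comm]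
  have hTcard : T.card = m * n - 1 := by
    rw [Finset.card_erase_of_mem (hΓ.mem_toFinset.2 hPΓ), ← Set.ncard_eq_toFinset_card Γ hΓ,
      hcard]
  have hIcard : (Finset.univ.erase i₀).card = m := by simp
  obtain ⟨i₁, hi₁, E, hET, hE, hEzero, hcover⟩ := Finset.exists_card_exclusive_lt (n := n)
    (fun x hx => hvan x ((hT x).1 hx).1 ((hT x).1 hx).2) (by rw [hTcard, hIcard]; omega)
  obtain ⟨R₀, hR₀T, hR₀E⟩ := Finset.exists_mem_notMem_of_card_lt_card (s := E) (t := T)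
    (by omega)
  obtain ⟨j₂, hj₂, hR₀⟩ := hcover R₀ hR₀T hR₀E
  have hJ : ((Finset.univ.erase i₀).erase i₁).card + 1 = m := by
    rw [Finset.card_erase_add_one hi₁, hIcard]
  rw [← Finset.mul_prod_erase _ h (Finset.mem_univ i₀), ← Finset.mul_prod_erase _ h hi₁]
  simpa only [hJ] using mul_mul_prod_mem_span_S1Phi hlgp hΓ hPΓ
    (fun x hx => ((hT x).1 (hET hx)).1) hE (fun j _ => hh j)
    (fun x hx hxP hxE => hcover x ((hT x).2 ⟨hx, hxP⟩) hxE) (fun x hx => (hEzero x hx).2) hj₂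
    ((hT R₀).1 hR₀T).1 ((hT R₀).1 hR₀T).2 hR₀ (hh i₀).2 haP (hh i₁).2
    fun x hx => (hEzero x hx).1

/-- Lemma: let `Γ ⊆ ℙⁿ` consist of `mn` points in linearly general position, `m ≥ 3`,
and let `F = h₁⋯h_{m+1} ∈ Φ(Γ)_{m+1}` with `μ_Γ(F) = mn-1`.  Then `F` lies in the
`k`-linear span of `S₁Φ(Γ)_m`. -/
theorem mu_eq_d_sub_one_case (k : Type*) [Field k] [IsAlgClosed k] (n m : ℕ) (hn : 1 ≤ n)
    (hm : 3 ≤ m) (Γ : Set (Projectivization k (Fin (n + 1) → k)))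
    (hfin : Γ.Finite) (hcard : Γ.ncard = m * n) (hlgp : LinGenPos k n Γ)
    (h : Fin (m + 1) → MvPolynomial (Fin (n + 1)) k)
    (hh : ∀ i, h i ≠ 0 ∧ (h i).IsHomogeneous 1)
    (hF : (∏ i, h i) ∈ gradedVanishing k n Γ (m + 1))
    (hmu : (Finset.univ.sup fun i =>
        lambdaGamma k n Γ (∏ j ∈ Finset.univ.erase i, h j)) = m * n - 1) :
    (∏ i, h i) ∈ Submodule.span k (S1Phi k n Γ m) :=
  mu_eq_d_sub_one_case_general k n m hn hm Γ hcard hlgp h hh hF hmu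
end
end

section
/- Let Γ ⊆ Pⁿ be a finite set of exactly d = mn points in linearly general position for some integer m ≥ 2. (a) If F = H₁⋯H_m ∈ Φ(Γ)_m with each H_i a nonzero linear form, then the sets Γ ∩ V(H₁), …, Γ ∩ V(H_m) form a partition of Γ into m pairwise disjoint subsets each of cardinality exactly n. (b) Conversely, if Γ = Γ₁ ∪ ⋯ ∪ Γ_m is a partition of Γ into m subsets each of cardinality n, and for each i the linear form H_i ∈ S₁ \ {0} vanishes on Γ_i, then H₁⋯H_m ∈ Φ(Γ)_m. -/
open MvPolynomial

noncomputable section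

/-!
A hyperplane `V(H)` contains at most `n` points of a set `Γ` in linearly general position: `n + 1`
of them would span `k^{n+1}`, on which the linear form `H` would then vanish identically. If
`H₁⋯H_m` vanishes on `Γ`, the sets `Γ ∩ V(Hᵢ)` cover the `mn` points of `Γ`, so none of them can
have fewer than `n` points and no point can be counted twice. The converse is immediate.
-/

theorem Finsupp.degree_eq_one_iff {σ : Type*} {d : σ →₀ ℕ} :
    d.degree = 1 ↔ ∃ i, d = Finsupp.single i 1 := by
  classical
  refine ⟨fun h => ?_, by rintro ⟨i, rfl⟩; simp⟩
  obtain ⟨i, hi⟩ := Multiset.card_eq_one.mp (by rwa [Finsupp.card_toMultiset] :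
    Multiset.card (Finsupp.toMultiset d) = 1)
  exact ⟨i, by rw [← Finsupp.toMultiset_toFinsupp d, hi, Multiset.toFinsupp_singleton]⟩

namespace MvPolynomial.IsHomogeneous

variable {σ R : Type*} [Fintype σ] [CommSemiring R] {H : MvPolynomial σ R}

theorem sum_monomial_single_coeff (hH : H.IsHomogeneous 1) :
    ∑ i, monomial (Finsupp.single i 1) (coeff (Finsupp.single i 1) H) = H := by
  classical
  ext d
  rw [coeff_sum]
  by_cases hd : d.degree = 1
  · obtain ⟨j, rfl⟩ := Finsupp.degree_eq_one_iff.mp hd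
    simp [coeff_monomial, Finsupp.single_left_inj one_ne_zero]
  · rw [hH.coeff_eq_zero hd]
    refine Finset.sum_eq_zero fun i _ => ?_
    rw [coeff_monomial, if_neg]
    rintro rfl
    simp at hd

theorem eval_eq_linearCombination (hH : H.IsHomogeneous 1) (v : σ → R) :
    eval v H = Fintype.linearCombination R (fun i => coeff (Finsupp.single i 1) H) v := by
  conv_lhs => rw [← hH.sum_monomial_single_coeff]
  simp [Fintype.linearCombination_apply, eval_monomial, mul_comm]

theorem eq_zero_of_eval_eq_zero_of_span_eq_top (hH : H.IsHomogeneous 1) {ι : Type*}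
    {w : ι → σ → R} (hw : Submodule.span R (Set.range w) = ⊤) (hHw : ∀ j, eval (w j) H = 0) :
    H = 0 := by
  classical
  set L := Fintype.linearCombination R fun i => coeff (Finsupp.single i 1) H
  have hL : L = 0 := LinearMap.ext_on_range hw fun j => by
    rw [← hH.eval_eq_linearCombination, hHw, LinearMap.zero_apply]
  have hcoeff : ∀ i, coeff (Finsupp.single i 1) H = 0 := fun i => by
    simpa [L] using congrArg (· (Pi.single i 1)) hL
  rw [← hH.sum_monomial_single_coeff]
  simp [hcoeff]

end MvPolynomial.IsHomogeneous

namespace LinGenPos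

variable {k : Type*} [Field k] {n : ℕ} {Γ : Set (Projectivization k (Fin (n + 1) → k))}
  {H : MvPolynomial (Fin (n + 1)) k}

theorem card_le_of_eval_eq_zero_s12 (hΓ : LinGenPos k n Γ) (hH0 : H ≠ 0) (hH : H.IsHomogeneous 1)
    {s : Finset (Projectivization k (Fin (n + 1) → k))} (hsΓ : ↑s ⊆ Γ)
    (hsH : ∀ P ∈ s, eval P.rep H = 0) : s.card ≤ n := by
  by_contra! hs
  obtain ⟨t, hts, ht⟩ := Finset.exists_subset_card_eq (Nat.succ_le_of_lt hs)
  have hspan := (hΓ t ((Finset.coe_subset.mpr hts).trans hsΓ) ht.le)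
    |>.span_eq_top_of_card_eq_finrank' (by simp [ht])
  exact hH0 (hH.eq_zero_of_eval_eq_zero_of_span_eq_top hspan fun P => hsH P (hts P.2))

theorem finite_and_ncard_le (hΓ : LinGenPos k n Γ) (hH0 : H ≠ 0) (hH : H.IsHomogeneous 1) :
    {P ∈ Γ | eval P.rep H = 0}.Finite ∧ {P ∈ Γ | eval P.rep H = 0}.ncard ≤ n := by
  have hcard : ∀ s : Finset _, ↑s ⊆ {P ∈ Γ | eval P.rep H = 0} → s.card ≤ n := fun s hs =>
    hΓ.card_le_of_eval_eq_zero_s12 hH0 hH (fun P hP => (hs hP).1) fun P hP => (hs hP).2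
  have hfin : {P ∈ Γ | eval P.rep H = 0}.Finite := by
    by_contra hinf
    obtain ⟨t, ht, htc⟩ := Set.Infinite.exists_subset_card_eq hinf (n + 1)
    exact absurd (hcard t ht) (by omega)
  exact ⟨hfin, by simpa [Set.ncard_eq_toFinset_card _ hfin] using hcard hfin.toFinset (by simp)⟩

end LinGenPos

namespace Set

variable {ι α : Type*} [Fintype ι] {A : ι → Set α}

open scoped Function in
theorem pairwise_disjoint_of_sum_ncard_le_ncard_iUnion (hA : ∀ i, (A i).Finite)
    (h : ∑ i, (A i).ncard ≤ (⋃ i, A i).ncard) : Pairwise (Disjoint on A) := by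
  classical
  intro i j hij
  rw [Function.onFun, disjoint_left]
  intro x hxi hxj
  -- deleting `x` from `A i` keeps the union but lowers the sum of the cardinalities
  set A' := Function.update A i (A i \ {x})
  have hU : ⋃ l, A' l = ⋃ l, A l := by
    refine subset_antisymm (iUnion_mono fun l => ?_) (iUnion_subset fun l y hy => ?_)
    · rcases eq_or_ne l i with rfl | hl
      · simp [A']
      · simp [A', hl]
    · refine mem_iUnion.mpr ?_
      rcases eq_or_ne l i with rfl | hl
      · rcases eq_or_ne y x with rfl | hyx
        · exact ⟨j, by simpa [A', hij.symm] using hxj⟩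
        · exact ⟨l, by simp [A', hy, hyx]⟩
      · exact ⟨l, by simpa [A', hl] using hy⟩
  have hlt : ∑ l, (A' l).ncard < ∑ l, (A l).ncard := by
    refine Finset.sum_lt_sum (fun l _ => ?_) ⟨i, Finset.mem_univ _, ?_⟩
    · rcases eq_or_ne l i with rfl | hl
      · simpa [A'] using ncard_le_ncard sdiff_subset (hA l)
      · simp [A', hl]
    · simpa [A'] using ncard_sdiff_singleton_lt_of_mem hxi (hA i)
  have := ncard_iUnion_le_of_fintype A'
  rw [hU] at this
  omega

theorem ncard_eq_of_ncard_iUnion_eq_card_mul {n : ℕ} (hA : ∀ i, (A i).ncard ≤ n)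
    (h : (⋃ i, A i).ncard = Fintype.card ι * n) : ∀ i, (A i).ncard = n := by
  have hsum : ∑ i, (A i).ncard = ∑ _i : ι, n :=
    le_antisymm (Finset.sum_le_sum fun i _ => hA i)
      (by simpa [h] using ncard_iUnion_le_of_fintype A)
  exact fun i => (Finset.sum_eq_sum_iff_of_le fun i _ => hA i).mp hsum i (Finset.mem_univ i)

end Set

theorem prod_mem_evalVanishing_iff {k : Type*} [Field k] {n : ℕ}
    {Γ : Set (Projectivization k (Fin (n + 1) → k))} {ι : Type*} [Fintype ι]
    {H : ι → MvPolynomial (Fin (n + 1)) k} :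
    ∏ i, H i ∈ evalVanishing k n Γ ↔ ⋃ i, {P ∈ Γ | eval P.rep (H i) = 0} = Γ := by
  have hsub : ⋃ i, {P ∈ Γ | eval P.rep (H i) = 0} ⊆ Γ :=
    Set.iUnion_subset fun i => Set.sep_subset _ _
  rw [Set.Subset.antisymm_iff, and_iff_right hsub]
  change (∀ P ∈ Γ, _) ↔ _
  simp +contextual [Set.subset_def, Finset.prod_eq_zero_iff]

theorem phi_partition_correspondence_general (k : Type*) [Field k] (n m : ℕ)
    (Γ : Set (Projectivization k (Fin (n + 1) → k)))
    (hcard : Γ.ncard = m * n) (hlgp : LinGenPos k n Γ) :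
    (∀ H : Fin m → MvPolynomial (Fin (n + 1)) k,
      (∀ i, H i ≠ 0 ∧ (H i).IsHomogeneous 1) → (∏ i, H i) ∈ Phi k n Γ m →
        ((∀ i j, i ≠ j →
            Disjoint {P ∈ Γ | eval (Projectivization.rep P) (H i) = 0}
              {P ∈ Γ | eval (Projectivization.rep P) (H j) = 0}) ∧
          (⋃ i, {P ∈ Γ | eval (Projectivization.rep P) (H i) = 0}) = Γ ∧
          ∀ i, Set.ncard {P ∈ Γ | eval (Projectivization.rep P) (H i) = 0} = n)) ∧
    (∀ (G : Fin m → Set (Projectivization k (Fin (n + 1) → k)))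
        (H : Fin m → MvPolynomial (Fin (n + 1)) k),
      (⋃ i, G i) = Γ → (∀ i j, i ≠ j → Disjoint (G i) (G j)) →
      (∀ i, Set.ncard (G i) = n) →
      (∀ i, H i ≠ 0 ∧ (H i).IsHomogeneous 1) →
      (∀ i, ∀ P ∈ G i, eval (Projectivization.rep P) (H i) = 0) →
        (∏ i, H i) ∈ Phi k n Γ m) := by
  refine ⟨fun H hH hF => ?_, fun G H hGΓ _ _ hH hGH => ?_⟩
  · have hcover := prod_mem_evalVanishing_iff.mp (Submodule.mem_inf.mp hF.1).2
    have hA i := hlgp.finite_and_ncard_le (hH i).1 (hH i).2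
    have hAn := Set.ncard_eq_of_ncard_iUnion_eq_card_mul (fun i => (hA i).2)
      (by rw [hcover, hcard, Fintype.card_fin])
    refine ⟨fun i j hij => Set.pairwise_disjoint_of_sum_ncard_le_ncard_iUnion (fun i => (hA i).1)
      (by simp [hAn, hcover, hcard]) hij, hcover, hAn⟩
  · refine ⟨Submodule.mem_inf.mpr ⟨?_, ?_⟩, H, hH, rfl⟩
    · simpa using IsHomogeneous.prod Finset.univ H (fun _ => 1) fun i _ => (hH i).2
    · refine prod_mem_evalVanishing_iff.mpr (subset_antisymm
        (Set.iUnion_subset fun i => Set.sep_subset _ _) ?_)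
      calc Γ = ⋃ i, G i := hGΓ.symm
        _ ⊆ ⋃ i, {P ∈ Γ | eval P.rep (H i) = 0} :=
          Set.iUnion_mono fun i P hP => ⟨hGΓ ▸ Set.mem_iUnion_of_mem i hP, hGH i P hP⟩

/-- For `Γ` a set of exactly `mn` points in linearly general position, `m ≥ 2`:
(a) every `F = H₁⋯H_m ∈ Φ(Γ)_m` induces a partition of `Γ` into the `m` pairwise disjoint
sets `Γ ∩ V(Hᵢ)`, each of cardinality `n`; (b) conversely, linear forms vanishing on the
parts of such a partition multiply to an element of `Φ(Γ)_m`. -/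
theorem phi_partition_correspondence (k : Type*) [Field k] [IsAlgClosed k] (n m : ℕ)
    (hn : 1 ≤ n) (hm : 2 ≤ m) (Γ : Set (Projectivization k (Fin (n + 1) → k)))
    (hfin : Γ.Finite) (hcard : Γ.ncard = m * n) (hlgp : LinGenPos k n Γ) :
    (∀ H : Fin m → MvPolynomial (Fin (n + 1)) k,
      (∀ i, H i ≠ 0 ∧ (H i).IsHomogeneous 1) → (∏ i, H i) ∈ Phi k n Γ m →
        ((∀ i j, i ≠ j →
            Disjoint {P ∈ Γ | eval (Projectivization.rep P) (H i) = 0}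
              {P ∈ Γ | eval (Projectivization.rep P) (H j) = 0}) ∧
          (⋃ i, {P ∈ Γ | eval (Projectivization.rep P) (H i) = 0}) = Γ ∧
          ∀ i, Set.ncard {P ∈ Γ | eval (Projectivization.rep P) (H i) = 0} = n)) ∧
    (∀ (G : Fin m → Set (Projectivization k (Fin (n + 1) → k)))
        (H : Fin m → MvPolynomial (Fin (n + 1)) k),
      (⋃ i, G i) = Γ → (∀ i j, i ≠ j → Disjoint (G i) (G j)) →
      (∀ i, Set.ncard (G i) = n) →
      (∀ i, H i ≠ 0 ∧ (H i).IsHomogeneous 1) →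
      (∀ i, ∀ P ∈ G i, eval (Projectivization.rep P) (H i) = 0) →
        (∏ i, H i) ∈ Phi k n Γ m) :=
  phi_partition_correspondence_general k n m Γ hcard hlgp
end
end

section
/- Let Γ ⊆ Pⁿ be a finite set of d points in linearly general position and let ℓ ≥ 1 be an integer with d ≤ ℓn + 1. Then Γ is ℓ-normal; equivalently, the k-vector space I(Γ)_ℓ of degree-ℓ homogeneous polynomials vanishing on Γ has dimension exactly C(n+ℓ, n) − d (so the evaluation map from S_ℓ to k^Γ, given by evaluating at fixed representative vectors of the points of Γ, is surjective). -/
/-!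
Fix `P ∈ Γ`. The other `d - 1 ≤ ℓn` points split into `ℓ` groups of at most `n` points. Each
group together with `P` has at most `n + 1` points, so is linearly independent, and hence some
linear form vanishes on the group but not at `P`. The product of these `ℓ` forms is a form of
degree `ℓ` vanishing on `Γ \ {P}` but not at `P`. Such forms make evaluation `S_ℓ → k^Γ`
surjective, and rank–nullity then gives `dim I(Γ)_ℓ = C(n+ℓ, n) - d`.
-/

open MvPolynomial

noncomputable section

open Finset in
theorem MvPolynomial.finrank_homogeneousSubmodule (σ K : Type*) [Fintype σ] [Field K] (ℓ : ℕ) :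
    Module.finrank K (homogeneousSubmodule σ K ℓ) = (Fintype.card σ + ℓ - 1).choose ℓ := by
  classical
  have hdeg : {d : σ →₀ ℕ | d.degree = ℓ} = ↑((univ : Finset σ).finsuppAntidiag ℓ) := by
    ext d
    simp [Finsupp.degree_eq_sum]
  let b := (basisRestrictSupport K {d : σ →₀ ℕ | d.degree = ℓ}).map
    (LinearEquiv.ofEq _ _ (homogeneousSubmodule_eq_finsupp_supported σ K ℓ).symm)
  rw [Module.finrank_eq_nat_card_basis b, hdeg, Nat.card_coe_set_eq, Set.ncard_coe_finset,
    card_finsuppAntidiag_nat_eq_choose, card_univ]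

instance MvPolynomial.finiteDimensional_homogeneousSubmodule (σ K : Type*) [Finite σ] [Field K]
    (ℓ : ℕ) : FiniteDimensional K (homogeneousSubmodule σ K ℓ) :=
  Module.Finite.iff_fg.mpr (homogeneousSubmodule_fg σ K ℓ)

theorem Finset.exists_cover_card_le {α : Type*} [DecidableEq α] :
    ∀ {ℓ : ℕ} (s : Finset α) {n : ℕ}, s.card ≤ ℓ * n →
      ∃ t : Fin ℓ → Finset α, (∀ i, (t i).card ≤ n ∧ t i ⊆ s) ∧ ∀ x ∈ s, ∃ i, x ∈ t i
  | 0, s, _, hs => ⟨Fin.elim0, fun i => i.elim0, fun x hx => by simp_all⟩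
  | ℓ + 1, s, n, hs => by
    obtain ⟨u, hus, hu⟩ := s.exists_subset_card_eq (min_le_right n s.card)
    have hrest : (s \ u).card ≤ ℓ * n := by
      rw [card_sdiff_of_subset hus, hu]
      grind
    obtain ⟨t, ht, hcover⟩ := exists_cover_card_le (s \ u) hrest
    refine ⟨Fin.cons u t, Fin.cases ⟨hu ▸ min_le_left _ _, hus⟩
      fun i => ⟨(ht i).1, (ht i).2.trans sdiff_subset⟩, fun x hx => ?_⟩
    by_cases hxu : x ∈ u
    · exact ⟨0, hxu⟩
    · obtain ⟨i, hi⟩ := hcover x (mem_sdiff.mpr ⟨hx, hxu⟩)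
      exact ⟨i.succ, hi⟩

theorem LinGenPos.exists_dual_separating_s13 {k : Type*} [Field k] {n : ℕ}
    {Γ : Set (Projectivization k (Fin (n + 1) → k))} (hΓ : LinGenPos k n Γ)
    {s : Finset (Projectivization k (Fin (n + 1) → k))} (hsΓ : ↑s ⊆ Γ) (hs : s.card ≤ n)
    {P : Projectivization k (Fin (n + 1) → k)} (hP : P ∈ Γ) (hPs : P ∉ s) :
    ∃ φ : Module.Dual k (Fin (n + 1) → k), φ P.rep ≠ 0 ∧ ∀ Q ∈ s, φ Q.rep = 0 := by
  classical
  have hli : LinearIndepOn k Projectivization.rep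
      (↑(insert P s) : Set (Projectivization k (Fin (n + 1) → k))) :=
    hΓ (insert P s) (by simpa using Set.insert_subset hP hsΓ) (by simpa [hPs] using hs)
  rw [Finset.coe_insert] at hli
  have hspan := ((linearIndepOn_insert (by simpa using hPs)).mp hli).2
  obtain ⟨φ, hφP, hφs⟩ := Submodule.exists_dual_map_eq_bot_of_notMem hspan inferInstance
  refine ⟨φ, hφP, fun Q hQ => ?_⟩
  have hQ : φ Q.rep ∈ (Submodule.span k (Projectivization.rep '' ↑s)).map φ :=
    Submodule.mem_map_of_mem (Submodule.subset_span ⟨Q, hQ, rfl⟩)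
  rw [hφs] at hQ
  exact (Submodule.mem_bot k).mp hQ

def Module.Dual.toMvPolynomial {K : Type*} [CommSemiring K] {m : ℕ}
    (φ : Module.Dual K (Fin m → K)) : MvPolynomial (Fin m) K :=
  ∑ j, C (φ (Pi.single j 1)) * X j

theorem Module.Dual.isHomogeneous_toMvPolynomial {K : Type*} [CommSemiring K] {m : ℕ}
    (φ : Module.Dual K (Fin m → K)) : φ.toMvPolynomial.IsHomogeneous 1 :=
  IsHomogeneous.sum _ _ _ fun _ _ => (isHomogeneous_X _ _).C_mul _

@[simp]
theorem Module.Dual.eval_toMvPolynomial {K : Type*} [CommSemiring K] {m : ℕ}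
    (φ : Module.Dual K (Fin m → K)) (v : Fin m → K) :
    MvPolynomial.eval v φ.toMvPolynomial = φ v := by
  conv_rhs => rw [pi_eq_sum_univ' v, map_sum]
  simp [Module.Dual.toMvPolynomial, mul_comm]

theorem LinGenPos.exists_homogeneous_separating {k : Type*} [Field k] {n ℓ : ℕ}
    {Γ : Set (Projectivization k (Fin (n + 1) → k))} (hΓ : LinGenPos k n Γ) (hfin : Γ.Finite)
    (hcard : Γ.ncard ≤ ℓ * n + 1) {P : Projectivization k (Fin (n + 1) → k)} (hP : P ∈ Γ) :
    ∃ F : MvPolynomial (Fin (n + 1)) k, F.IsHomogeneous ℓ ∧ eval P.rep F ≠ 0 ∧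
      ∀ Q ∈ Γ, Q ≠ P → eval Q.rep F = 0 := by
  classical
  set s := hfin.toFinset.erase P
  have hs : s.card ≤ ℓ * n := by
    rw [Finset.card_erase_of_mem (hfin.mem_toFinset.mpr hP), ← Set.ncard_eq_toFinset_card Γ hfin]
    omega
  obtain ⟨t, ht, hcover⟩ := s.exists_cover_card_le hs
  have htΓ : ∀ i, ↑(t i) ⊆ Γ := fun i Q hQ =>
    hfin.mem_toFinset.mp (Finset.mem_of_mem_erase ((ht i).2 hQ))
  have hPt : ∀ i, P ∉ t i := fun i hPt => by simpa [s] using (ht i).2 hPt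
  choose φ hφP hφt using fun i => hΓ.exists_dual_separating_s13 (htΓ i) (ht i).1 hP (hPt i)
  refine ⟨∏ i, (φ i).toMvPolynomial, ?_, ?_, fun Q hQ hQP => ?_⟩
  · simpa using IsHomogeneous.prod Finset.univ _ (fun _ => 1)
      fun i _ => (φ i).isHomogeneous_toMvPolynomial
  · simpa [Finset.prod_ne_zero_iff] using hφP
  · obtain ⟨i, hi⟩ := hcover Q (by simpa [s] using ⟨hQP, hQ⟩)
    simpa using Finset.prod_eq_zero (Finset.mem_univ i) (hφt i Q hi)

theorem LinearMap.surjective_of_separating {K M ι : Type*} [DivisionRing K] [AddCommGroup M]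
    [Module K M] [Finite ι] (E : M →ₗ[K] ι → K)
    (h : ∀ i, ∃ m, E m i ≠ 0 ∧ ∀ j ≠ i, E m j = 0) : Function.Surjective E := by
  classical
  have hsingle : ∀ i, Pi.single i 1 ∈ range E := by
    intro i
    obtain ⟨m, hmi, hmj⟩ := h i
    refine ⟨(E m i)⁻¹ • m, funext fun j => ?_⟩
    by_cases hji : j = i
    · subst hji
      simp [hmi]
    · simp [hji, hmj j hji]
  rw [← range_eq_top, eq_top_iff, ← (Pi.basisFun K ι).span_eq, Submodule.span_le]
  rintro _ ⟨i, rfl⟩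
  simpa using hsingle i

def gradedEval (k : Type*) [Field k] (n : ℕ)
    (Γ : Set (Projectivization k (Fin (n + 1) → k))) (ℓ : ℕ) :
    homogeneousSubmodule (Fin (n + 1)) k ℓ →ₗ[k] (Γ → k) :=
  LinearMap.pi (fun P : Γ => (aeval (P : Projectivization k (Fin (n + 1) → k)).rep).toLinearMap)
    ∘ₗ (homogeneousSubmodule (Fin (n + 1)) k ℓ).subtype

@[simp]
theorem gradedEval_apply {k : Type*} [Field k] {n ℓ : ℕ}
    {Γ : Set (Projectivization k (Fin (n + 1) → k))} (F : homogeneousSubmodule (Fin (n + 1)) k ℓ)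
    (P : Γ) : gradedEval k n Γ ℓ F P = eval (P : Projectivization k (Fin (n + 1) → k)).rep F :=
  rfl

theorem finrank_gradedVanishing_eq_finrank_ker (k : Type*) [Field k] (n : ℕ)
    (Γ : Set (Projectivization k (Fin (n + 1) → k))) (ℓ : ℕ) :
    Module.finrank k (gradedVanishing k n Γ ℓ) =
      Module.finrank k (LinearMap.ker (gradedEval k n Γ ℓ)) := by
  have hker : LinearMap.ker (gradedEval k n Γ ℓ) =
      (gradedVanishing k n Γ ℓ).comap (homogeneousSubmodule (Fin (n + 1)) k ℓ).subtype := by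
    ext F
    simp [gradedVanishing, evalVanishing, funext_iff]
  rw [hker]
  exact (Submodule.comapSubtypeEquivOfLe inf_le_left).finrank_eq.symm

theorem ell_normality_general (k : Type*) [Field k] (n d ℓ : ℕ)
    (Γ : Set (Projectivization k (Fin (n + 1) → k)))
    (hfin : Γ.Finite) (hcard : Γ.ncard = d) (hlgp : LinGenPos k n Γ)
    (hd : d ≤ ℓ * n + 1) :
    Module.finrank k (gradedVanishing k n Γ ℓ) = Nat.choose (n + ℓ) n - d ∧
      ∀ f : Γ → k, ∃ F : MvPolynomial (Fin (n + 1)) k, F.IsHomogeneous ℓ ∧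
        ∀ P : Γ, eval (Projectivization.rep (P : Projectivization k (Fin (n + 1) → k))) F
          = f P := by
  have := hfin.fintype
  have hsurj : Function.Surjective (gradedEval k n Γ ℓ) := by
    refine (gradedEval k n Γ ℓ).surjective_of_separating fun P => ?_
    obtain ⟨F, hF, hFP, hFQ⟩ := hlgp.exists_homogeneous_separating hfin (hcard ▸ hd) P.2
    exact ⟨⟨F, hF⟩, hFP, fun Q hQ => hFQ Q Q.2 (Subtype.coe_injective.ne hQ)⟩
  refine ⟨?_, fun f => ?_⟩
  · have hrank := (gradedEval k n Γ ℓ).finrank_range_add_finrank_ker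
    rw [LinearMap.range_eq_top.mpr hsurj, finrank_top, Module.finrank_fintype_fun_eq_card,
      ← Nat.card_eq_fintype_card, Nat.card_coe_set_eq, hcard, finrank_homogeneousSubmodule,
      Fintype.card_fin, show n + 1 + ℓ - 1 = n + ℓ by omega, ← Nat.choose_symm_add] at hrank
    rw [finrank_gradedVanishing_eq_finrank_ker]
    omega
  · obtain ⟨⟨F, hF⟩, hFf⟩ := hsurj f
    exact ⟨F, hF, congrFun hFf⟩

/-- If `Γ ⊆ ℙⁿ` is a finite set of `d` points in linearly general position and
`d ≤ ℓn + 1`, then `Γ` is `ℓ`-normal: `dim_k I(Γ)_ℓ = C(n+ℓ,n) - d`, and the evaluation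
map from degree-`ℓ` forms to `k^Γ` is surjective. -/
theorem ell_normality (k : Type*) [Field k] [IsAlgClosed k] (n d ℓ : ℕ) (hn : 1 ≤ n)
    (hl : 1 ≤ ℓ) (Γ : Set (Projectivization k (Fin (n + 1) → k)))
    (hfin : Γ.Finite) (hcard : Γ.ncard = d) (hlgp : LinGenPos k n Γ)
    (hd : d ≤ ℓ * n + 1) :
    Module.finrank k (gradedVanishing k n Γ ℓ) = Nat.choose (n + ℓ) n - d ∧
      ∀ f : Γ → k, ∃ F : MvPolynomial (Fin (n + 1)) k, F.IsHomogeneous ℓ ∧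
        ∀ P : Γ, eval (Projectivization.rep (P : Projectivization k (Fin (n + 1) → k))) F
          = f P :=
  ell_normality_general k n d ℓ Γ hfin hcard hlgp hd
end
end

section
/- Let Γ ⊆ Pⁿ be a finite set of exactly mn points in linearly general position for some integer m ≥ 2, and let F = h₁⋯h_{m+1} ∈ Φ(Γ)_{m+1} be a product of m+1 nonzero linear forms vanishing on Γ, ordered so that μ_Γ(F) = λ_Γ(h₁⋯h_m). If μ_Γ(F) ≤ mn − 2, then there exist G₁, G₂ ∈ Φ(Γ)_{m+1} such that F = G₁ + G₂ and μ_Γ(G_j) ≥ μ_Γ(F) + 1 for j = 1, 2. -/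
open MvPolynomial

noncomputable section

/-!
Write `F = h₀ ⋯ h_m` with `μ_Γ(F)` attained by dropping `h_m`, and let `S` be the set of points
of `Γ` on one of `h₀, …, h_{m-1}`, so `|S| = μ_Γ(F) ≤ mn - 2` and two points `A ≠ B` of `Γ` lie
off `S`. The points of `S` lying on `h_i` but on no other `h_j`, `j < m`, form disjoint sets
`W_i ⊆ S`, so some `W_i` has fewer than `n` points. Then `W_i ∪ {A, B}` has at most `n + 1`
points in linearly general position, so `h_i = ℓ₁ + ℓ₂` with linear forms `ℓ₁` vanishing on
`W_i ∪ {A}` and `ℓ₂` on `W_i ∪ {B}`. Replacing `h_i` by `ℓ₁`, resp. `ℓ₂`, gives `G₁ + G₂ = F`.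
Both still vanish on `Γ`, since only the points of `W_i` depended on `h_i`, and the zero set of
their first `m` factors contains `S ∪ {A}`, resp. `S ∪ {B}`.
-/

open MvPolynomial Finset
open Function (update)
open scoped LinearAlgebra.Projectivization

theorem LinearIndependent.exists_linearMap_apply_eq {ι K V : Type*} [Field K] [AddCommGroup V]
    [Module K V] {v : ι → V} (hv : LinearIndependent K v) (a : ι → K) :
    ∃ φ : V →ₗ[K] K, ∀ i, φ (v i) = a i := by
  obtain ⟨φ, hφ⟩ := LinearMap.exists_extend (Finsupp.linearCombination K a ∘ₗ hv.repr)
  refine ⟨φ, fun i => ?_⟩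
  have := LinearMap.congr_fun hφ ⟨v i, Submodule.subset_span (Set.mem_range_self i)⟩
  simpa [hv.repr_eq_single i ⟨v i, _⟩ rfl] using this

theorem MvPolynomial.exists_isHomogeneous_one_eval_eq {σ K : Type*} [Fintype σ] [DecidableEq σ]
    [CommRing K] (φ : (σ → K) →ₗ[K] K) :
    ∃ ℓ : MvPolynomial σ K, ℓ.IsHomogeneous 1 ∧ ∀ v, eval v ℓ = φ v := by
  refine ⟨∑ i, C (φ fun j => if i = j then 1 else 0) * X i,
    IsHomogeneous.sum _ _ _ fun i _ => isHomogeneous_C_mul_X _ i, fun v => ?_⟩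
  simp [φ.pi_apply_eq_sum_univ v, mul_comm]

theorem LinGenPos.exists_isHomogeneous_eval_eq {k : Type*} [Field k] {n : ℕ}
    {Γ : Set (ℙ k (Fin (n + 1) → k))} (hΓ : LinGenPos k n Γ) {T : Finset (ℙ k (Fin (n + 1) → k))}
    (hT : ↑T ⊆ Γ) (hTc : T.card ≤ n + 1) (a : ℙ k (Fin (n + 1) → k) → k) :
    ∃ ℓ : MvPolynomial (Fin (n + 1)) k, ℓ.IsHomogeneous 1 ∧ ∀ P ∈ T, eval P.rep ℓ = a P := by
  obtain ⟨φ, hφ⟩ := (hΓ T hT hTc).exists_linearMap_apply_eq fun P => a P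
  obtain ⟨ℓ, hℓ, hℓφ⟩ := exists_isHomogeneous_one_eval_eq φ
  exact ⟨ℓ, hℓ, fun P hP => (hℓφ _).trans (hφ ⟨P, hP⟩)⟩

section PrivatePart

variable {ι α : Type*} [DecidableEq ι] [DecidableEq α]

def privatePart (s : Finset ι) (Z : ι → Finset α) (i : ι) : Finset α :=
  Z i \ (s.erase i).biUnion Z

theorem privatePart_subset (s : Finset ι) (Z : ι → Finset α) (i : ι) :
    privatePart s Z i ⊆ Z i :=
  sdiff_subset

theorem privatePart_anti {s t : Finset ι} (hst : s ⊆ t) (Z : ι → Finset α) (i : ι) :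
    privatePart t Z i ⊆ privatePart s Z i :=
  sdiff_subset_sdiff subset_rfl (biUnion_subset_biUnion_of_subset_left _ (erase_subset_erase i hst))

theorem pairwiseDisjoint_privatePart (s : Finset ι) (Z : ι → Finset α) :
    (s : Set ι).PairwiseDisjoint (privatePart s Z) := by
  intro i hi j hj hij
  refine disjoint_left.2 fun x hxi hxj => (mem_sdiff.1 hxj).2 ?_
  exact mem_biUnion.2 ⟨i, mem_erase.2 ⟨hij, hi⟩, privatePart_subset s Z i hxi⟩

theorem exists_card_privatePart_lt (s : Finset ι) (Z : ι → Finset α) {n : ℕ}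
    (h : (s.biUnion Z).card < s.card * n) : ∃ i ∈ s, (privatePart s Z i).card < n := by
  by_contra! hge
  have : s.card * n ≤ (s.biUnion (privatePart s Z)).card := by
    rw [card_biUnion (pairwiseDisjoint_privatePart s Z)]
    simpa using sum_le_sum hge
  exact (this.trans (card_le_card (biUnion_mono fun i _ => privatePart_subset s Z i))).not_gt h

theorem biUnion_subset_biUnion_update {s : Finset ι} {Z : ι → Finset α} {i : ι} {Z' : Finset α}
    (h : privatePart s Z i ⊆ Z') : s.biUnion Z ⊆ s.biUnion (update Z i Z') := by
  intro x hx
  obtain ⟨j, hj, hxj⟩ := mem_biUnion.1 hx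
  by_cases hx' : x ∈ (s.erase i).biUnion Z
  · obtain ⟨j', hj', hxj'⟩ := mem_biUnion.1 hx'
    exact mem_biUnion.2
      ⟨j', mem_of_mem_erase hj', by rwa [Function.update_of_ne (ne_of_mem_erase hj')]⟩
  · obtain rfl : j = i := by
      by_contra hji
      exact hx' (mem_biUnion.2 ⟨j, mem_erase.2 ⟨hji, hj⟩, hxj⟩)
    exact mem_biUnion.2 ⟨j, hj, by rw [Function.update_self]; exact h (mem_sdiff.2 ⟨hxj, hx'⟩)⟩

end PrivatePart

theorem Finset.prod_update_add {ι R : Type*} [Fintype ι] [DecidableEq ι] [CommSemiring R]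
    (f : ι → R) (i : ι) (a b : R) :
    ∏ j, update f i (a + b) j = ∏ j, update f i a j + ∏ j, update f i b j := by
  simp only [prod_update_of_mem (mem_univ i), add_mul]

section VanishingPoints

open scoped Classical

variable {k : Type*} [Field k] {n : ℕ}

def vanishingPoints (G : Finset (ℙ k (Fin (n + 1) → k))) (f : MvPolynomial (Fin (n + 1)) k) :
    Finset (ℙ k (Fin (n + 1) → k)) :=
  {P ∈ G | eval P.rep f = 0}

variable {G : Finset (ℙ k (Fin (n + 1) → k))}

theorem mem_vanishingPoints {f : MvPolynomial (Fin (n + 1)) k} {P : ℙ k (Fin (n + 1) → k)} :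
    P ∈ vanishingPoints G f ↔ P ∈ G ∧ eval P.rep f = 0 :=
  mem_filter

theorem vanishingPoints_subset (f : MvPolynomial (Fin (n + 1)) k) : vanishingPoints G f ⊆ G :=
  filter_subset _ _

theorem lambdaGamma_coe_finset (f : MvPolynomial (Fin (n + 1)) k) :
    lambdaGamma k n ↑G f = (vanishingPoints G f).card := by
  rw [lambdaGamma, vanishingPoints, ← Set.ncard_coe_finset, coe_filter]
  rfl

theorem vanishingPoints_prod {ι : Type*} (s : Finset ι) (h : ι → MvPolynomial (Fin (n + 1)) k) :
    vanishingPoints G (∏ j ∈ s, h j) = s.biUnion (vanishingPoints G ∘ h) := by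
  ext P
  simp only [mem_vanishingPoints, mem_biUnion, Function.comp_apply, map_prod, prod_eq_zero_iff]
  grind

theorem mem_evalVanishing_coe_finset {F : MvPolynomial (Fin (n + 1)) k} :
    F ∈ evalVanishing k n ↑G ↔ G ⊆ vanishingPoints G F :=
  ⟨fun hF P hP => mem_vanishingPoints.2 ⟨hP, hF P hP⟩,
    fun hF _ hP => (mem_vanishingPoints.1 (hF hP)).2⟩

theorem LinGenPos.exists_add_eq (hG : LinGenPos k n ↑G) {f : MvPolynomial (Fin (n + 1)) k}
    (hf : f.IsHomogeneous 1) {W : Finset (ℙ k (Fin (n + 1) → k))} (hW : W ⊆ vanishingPoints G f)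
    (hWc : W.card < n) {A B : ℙ k (Fin (n + 1) → k)} (hA : A ∈ G \ vanishingPoints G f)
    (hB : B ∈ G \ vanishingPoints G f) (hAB : A ≠ B) :
    ∃ ℓ₁ ℓ₂ : MvPolynomial (Fin (n + 1)) k, ℓ₁ + ℓ₂ = f ∧
      (ℓ₁ ≠ 0 ∧ ℓ₁.IsHomogeneous 1) ∧ (ℓ₂ ≠ 0 ∧ ℓ₂.IsHomogeneous 1) ∧
      insert A W ⊆ vanishingPoints G ℓ₁ ∧ insert B W ⊆ vanishingPoints G ℓ₂ := by
  obtain ⟨hAG, hfA⟩ := mem_sdiff.1 hA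
  obtain ⟨hBG, hfB⟩ := mem_sdiff.1 hB
  have hWG : W ⊆ G := hW.trans (vanishingPoints_subset f)
  have hBWG : insert B W ⊆ G := insert_subset hBG hWG
  have hTc : (insert A (insert B W)).card ≤ n + 1 :=
    (card_insert_le _ _).trans (Nat.succ_le_succ ((card_insert_le _ _).trans hWc))
  obtain ⟨ℓ, hℓ, hℓT⟩ := hG.exists_isHomogeneous_eval_eq
    (coe_subset.2 (insert_subset hAG hBWG)) hTc fun P => if P = A then 0 else eval P.rep f
  have hℓA : eval A.rep ℓ = 0 := by simpa using hℓT A (mem_insert_self _ _)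
  have hℓf : ∀ P ∈ insert B W, eval P.rep ℓ = eval P.rep f := by
    intro P hP
    rw [hℓT P (mem_insert_of_mem hP)]
    split_ifs with hPA
    · subst hPA
      exact (mem_vanishingPoints.1 (hW ((mem_insert.1 hP).resolve_left hAB))).2.symm
    · rfl
  refine ⟨ℓ, f - ℓ, add_sub_cancel _ _, ⟨?_, hℓ⟩, ⟨?_, hf.sub hℓ⟩, ?_, ?_⟩
  · rintro rfl
    exact hfB (mem_vanishingPoints.2 ⟨hBG, (hℓf B (mem_insert_self _ _)).symm.trans (map_zero _)⟩)
  · intro h0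
    exact hfA (mem_vanishingPoints.2 ⟨hAG, by simpa [hℓA] using congrArg (eval A.rep) h0⟩)
  · refine insert_subset (mem_vanishingPoints.2 ⟨hAG, hℓA⟩) fun P hP => ?_
    exact mem_vanishingPoints.2
      ⟨hWG hP, (hℓf P (mem_insert_of_mem hP)).trans (mem_vanishingPoints.1 (hW hP)).2⟩
  · exact fun P hP => mem_vanishingPoints.2 ⟨hBWG hP, by rw [map_sub, hℓf P hP, sub_self]⟩

def muGamma {ι : Type*} [Fintype ι] [DecidableEq ι] (Γ : Set (ℙ k (Fin (n + 1) → k)))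
    (h : ι → MvPolynomial (Fin (n + 1)) k) : ℕ :=
  univ.sup fun i => lambdaGamma k n Γ (∏ j ∈ univ.erase i, h j)

variable {ι : Type*} [Fintype ι] [DecidableEq ι]

theorem lambdaGamma_prod_erase_lt_muGamma_update (h : ι → MvPolynomial (Fin (n + 1)) k) {o i : ι}
    (hi : i ≠ o) {ℓ : MvPolynomial (Fin (n + 1)) k} {E : ℙ k (Fin (n + 1) → k)}
    (hE : E ∉ (univ.erase o).biUnion (vanishingPoints G ∘ h))
    (hℓ : insert E (privatePart (univ.erase o) (vanishingPoints G ∘ h) i) ⊆ vanishingPoints G ℓ) :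
    lambdaGamma k n ↑G (∏ j ∈ univ.erase o, h j) < muGamma ↑G (update h i ℓ) := by
  set s := univ.erase o
  have hEi : E ∈ s.biUnion (update (vanishingPoints G ∘ h) i (vanishingPoints G ℓ)) :=
    mem_biUnion.2 ⟨i, mem_erase.2 ⟨hi, mem_univ i⟩,
      by rw [Function.update_self]; exact hℓ (mem_insert_self _ _)⟩
  calc lambdaGamma k n ↑G (∏ j ∈ s, h j) = (s.biUnion (vanishingPoints G ∘ h)).card := by
        rw [lambdaGamma_coe_finset, vanishingPoints_prod]
    _ < (insert E (s.biUnion (vanishingPoints G ∘ h))).card := card_lt_card (ssubset_insert hE)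
    _ ≤ (s.biUnion (update (vanishingPoints G ∘ h) i (vanishingPoints G ℓ))).card :=
        card_le_card (insert_subset hEi
          (biUnion_subset_biUnion_update ((subset_insert _ _).trans hℓ)))
    _ = lambdaGamma k n ↑G (∏ j ∈ s, update h i ℓ j) := by
        rw [lambdaGamma_coe_finset, vanishingPoints_prod, Function.comp_update]
    _ ≤ muGamma ↑G (update h i ℓ) :=
        le_sup (f := fun o => lambdaGamma k n ↑G (∏ j ∈ univ.erase o, update h i ℓ j))
          (mem_univ o)

theorem prod_update_mem_evalVanishing {h : ι → MvPolynomial (Fin (n + 1)) k}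
    (hF : ∏ j, h j ∈ evalVanishing k n ↑G) {s : Finset ι} {i : ι}
    {ℓ : MvPolynomial (Fin (n + 1)) k}
    (hℓ : privatePart s (vanishingPoints G ∘ h) i ⊆ vanishingPoints G ℓ) :
    ∏ j, update h i ℓ j ∈ evalVanishing k n ↑G := by
  rw [mem_evalVanishing_coe_finset, vanishingPoints_prod] at hF ⊢
  rw [Function.comp_update]
  exact hF.trans (biUnion_subset_biUnion_update ((privatePart_anti (subset_univ s) _ i).trans hℓ))

end VanishingPoints

theorem prod_mem_Phi {k : Type*} [Field k] {n m : ℕ} {Γ : Set (ℙ k (Fin (n + 1) → k))}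
    {g : Fin m → MvPolynomial (Fin (n + 1)) k} (hg : ∀ i, g i ≠ 0 ∧ (g i).IsHomogeneous 1)
    (hvan : ∏ i, g i ∈ evalVanishing k n Γ) : ∏ i, g i ∈ Phi k n Γ m :=
  ⟨⟨by simpa using IsHomogeneous.prod univ g (fun _ => 1) fun i _ => (hg i).2, hvan⟩, g, hg, rfl⟩

theorem mu_induction_step_general (k : Type*) [Field k] (n m : ℕ) (hn : 1 ≤ n)
    (hm : 2 ≤ m) (Γ : Set (Projectivization k (Fin (n + 1) → k)))
    (hcard : Γ.ncard = m * n) (hlgp : LinGenPos k n Γ)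
    (h : Fin (m + 1) → MvPolynomial (Fin (n + 1)) k)
    (hh : ∀ i, h i ≠ 0 ∧ (h i).IsHomogeneous 1)
    (hF : (∏ i, h i) ∈ gradedVanishing k n Γ (m + 1))
    (hord : (Finset.univ.sup fun i =>
        lambdaGamma k n Γ (∏ j ∈ Finset.univ.erase i, h j)) =
      lambdaGamma k n Γ (∏ j ∈ Finset.univ.erase (Fin.last m), h j))
    (hmu : (Finset.univ.sup fun i =>
        lambdaGamma k n Γ (∏ j ∈ Finset.univ.erase i, h j)) ≤ m * n - 2) :
    ∃ g₁ g₂ : Fin (m + 1) → MvPolynomial (Fin (n + 1)) k,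
      (∀ i, g₁ i ≠ 0 ∧ (g₁ i).IsHomogeneous 1) ∧
      (∀ i, g₂ i ≠ 0 ∧ (g₂ i).IsHomogeneous 1) ∧
      (∏ i, g₁ i) ∈ Phi k n Γ (m + 1) ∧ (∏ i, g₂ i) ∈ Phi k n Γ (m + 1) ∧
      (∏ i, h i) = (∏ i, g₁ i) + (∏ i, g₂ i) ∧
      (Finset.univ.sup fun i =>
          lambdaGamma k n Γ (∏ j ∈ Finset.univ.erase i, h j)) + 1 ≤
        (Finset.univ.sup fun i =>
          lambdaGamma k n Γ (∏ j ∈ Finset.univ.erase i, g₁ j)) ∧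
      (Finset.univ.sup fun i =>
          lambdaGamma k n Γ (∏ j ∈ Finset.univ.erase i, h j)) + 1 ≤
        (Finset.univ.sup fun i =>
          lambdaGamma k n Γ (∏ j ∈ Finset.univ.erase i, g₂ j)) := by
  classical
  have hmn : 2 ≤ m * n := by nlinarith
  obtain ⟨G, rfl⟩ := (Set.finite_of_ncard_pos (by omega : 0 < Γ.ncard)).exists_finset_coe
  rw [Set.ncard_coe_finset] at hcard
  set s := univ.erase (Fin.last m)
  set Z := vanishingPoints G ∘ h
  have hμ : (s.biUnion Z).card ≤ m * n - 2 := by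
    rwa [hord, lambdaGamma_coe_finset, vanishingPoints_prod] at hmu
  have hs : s.card = m := by simp [s]
  obtain ⟨i, his, hWc⟩ := exists_card_privatePart_lt s Z (n := n) (by rw [hs]; omega)
  have hU : 1 < (G \ s.biUnion Z).card := by
    rw [card_sdiff_of_subset (biUnion_subset.2 fun j _ => vanishingPoints_subset (h j) :
      s.biUnion Z ⊆ G)]
    omega
  obtain ⟨A, hA, B, hB, hAB⟩ := one_lt_card.1 hU
  have hoff := sdiff_subset_sdiff (subset_refl G) (subset_biUnion_of_mem Z his)
  obtain ⟨ℓ₁, ℓ₂, hsum, hℓ₁, hℓ₂, hA₁, hB₂⟩ :=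
    hlgp.exists_add_eq (hh i).2 (privatePart_subset s Z i) hWc (hoff hA) (hoff hB) hAB
  have hlinear : ∀ ℓ : MvPolynomial (Fin (n + 1)) k, ℓ ≠ 0 ∧ ℓ.IsHomogeneous 1 →
      ∀ j, update h i ℓ j ≠ 0 ∧ (update h i ℓ j).IsHomogeneous 1 := fun ℓ hℓ =>
    (Function.forall_update_iff h fun _ q => q ≠ 0 ∧ q.IsHomogeneous 1).2 ⟨hℓ, fun j _ => hh j⟩
  have hg₁ := hlinear ℓ₁ hℓ₁
  have hg₂ := hlinear ℓ₂ hℓ₂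
  refine ⟨update h i ℓ₁, update h i ℓ₂, hg₁, hg₂,
    prod_mem_Phi hg₁ (prod_update_mem_evalVanishing hF.2 ((subset_insert _ _).trans hA₁)),
    prod_mem_Phi hg₂ (prod_update_mem_evalVanishing hF.2 ((subset_insert _ _).trans hB₂)),
    by rw [← prod_update_add, hsum, Function.update_eq_self], ?_, ?_⟩ <;> rw [hord]
  · exact lambdaGamma_prod_erase_lt_muGamma_update h (ne_of_mem_erase his) (mem_sdiff.1 hA).2 hA₁
  · exact lambdaGamma_prod_erase_lt_muGamma_update h (ne_of_mem_erase his) (mem_sdiff.1 hB).2 hB₂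

/-- The inductive step in the proof of Theorem 4.1: for `Γ` of `mn` points in linearly
general position, `m ≥ 2`, and `F = h₁⋯h_{m+1} ∈ Φ(Γ)_{m+1}` ordered so that
`μ_Γ(F) = λ_Γ(h₁⋯h_m)`, if `μ_Γ(F) ≤ mn - 2` then `F = G₁ + G₂` with
`G₁, G₂ ∈ Φ(Γ)_{m+1}` and `μ_Γ(G_j) ≥ μ_Γ(F) + 1`. -/
theorem mu_induction_step (k : Type*) [Field k] [IsAlgClosed k] (n m : ℕ) (hn : 1 ≤ n)
    (hm : 2 ≤ m) (Γ : Set (Projectivization k (Fin (n + 1) → k)))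
    (hfin : Γ.Finite) (hcard : Γ.ncard = m * n) (hlgp : LinGenPos k n Γ)
    (h : Fin (m + 1) → MvPolynomial (Fin (n + 1)) k)
    (hh : ∀ i, h i ≠ 0 ∧ (h i).IsHomogeneous 1)
    (hF : (∏ i, h i) ∈ gradedVanishing k n Γ (m + 1))
    (hord : (Finset.univ.sup fun i =>
        lambdaGamma k n Γ (∏ j ∈ Finset.univ.erase i, h j)) =
      lambdaGamma k n Γ (∏ j ∈ Finset.univ.erase (Fin.last m), h j))
    (hmu : (Finset.univ.sup fun i =>
        lambdaGamma k n Γ (∏ j ∈ Finset.univ.erase i, h j)) ≤ m * n - 2) :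
    ∃ g₁ g₂ : Fin (m + 1) → MvPolynomial (Fin (n + 1)) k,
      (∀ i, g₁ i ≠ 0 ∧ (g₁ i).IsHomogeneous 1) ∧
      (∀ i, g₂ i ≠ 0 ∧ (g₂ i).IsHomogeneous 1) ∧
      (∏ i, g₁ i) ∈ Phi k n Γ (m + 1) ∧ (∏ i, g₂ i) ∈ Phi k n Γ (m + 1) ∧
      (∏ i, h i) = (∏ i, g₁ i) + (∏ i, g₂ i) ∧
      (Finset.univ.sup fun i =>
          lambdaGamma k n Γ (∏ j ∈ Finset.univ.erase i, h j)) + 1 ≤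
        (Finset.univ.sup fun i =>
          lambdaGamma k n Γ (∏ j ∈ Finset.univ.erase i, g₁ j)) ∧
      (Finset.univ.sup fun i =>
          lambdaGamma k n Γ (∏ j ∈ Finset.univ.erase i, h j)) + 1 ≤
        (Finset.univ.sup fun i =>
          lambdaGamma k n Γ (∏ j ∈ Finset.univ.erase i, g₂ j)) :=
  mu_induction_step_general k n m hn hm Γ hcard hlgp h hh hF hord hmu
end
end
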